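/- arXiv:1604.05757 — 8 statements merged into one kernel-verified Lean document; each statement's English description precedes it below -/
import Mathlib

section
/- Let r ≥ 3, n ≥ 1 and S ⊆ [r]^n with μ(S) = |S|/r^n, and suppose S does not contain a combinatorial line. Then there exists an r-prover game G with question set Q̄_r and with all answer alphabets equal to 2^[n] × [n] such that val(G) ≤ 1 − 1/r and val(G^n) ≥ μ(S). -/
/-! The verifier of the game asks each prover `j` whether it is the distinguished prover
(`q j = true`); prover `j` answers a set `E_j ⊆ [n]` and an index `i_j`. It accepts iff all `i_j`
agree, `i_j ∈ E_j ↔ q j`, the `E_j` partition `[n]`, and the colouring `τ` with `i ∈ E_{τ i}`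
lies in `S`.

In the `n`-fold repetition the questions amount to a word `σ ∈ [r]^n`; if every prover answers
the set of coordinates where it was distinguished, the induced colouring is `σ`, so the provers
win whenever `σ ∈ S`, which has probability `μ(S)`.

A strategy winning the single game on all `r` questions produces a combinatorial line: comparing
two provers through a third one that is asked `false` by both shows that the sets `E_j` answered
to `false` are disjoint and miss a common index, and that on question `k` the set of prover `k`
must contain all coordinates they leave uncovered. Taking these coordinates as wildcards, the
`r` colourings form a line in `S`. -/

/-- The value of an `r`-prover game: the question set is `Qbar`, a finite set of
question tuples; `V` is the verification predicate; the value is the maximum over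
strategies (one function `Q j → A j` per prover) of the probability, over a uniformly
random question tuple from `Qbar`, that the verifier accepts. -/
noncomputable def gameValue {r : ℕ} {Q A : Fin r → Type}
    (Qbar : Finset (∀ j, Q j)) (V : (∀ j, Q j) → (∀ j, A j) → Bool) : ℝ :=
  sSup { x : ℝ | ∃ S : ∀ j, Q j → A j,
    x = ((Qbar.filter fun q => V q (fun j => S j (q j)) = true).card : ℝ) / (Qbar.card : ℝ) }

/-- The value of the `n`-fold parallel repetition of a game: questions are `n`-tuples
of question tuples sampled independently and uniformly from `Qbar`, each prover `j`
sees only its own vector of questions, and the verifier accepts iff `V` accepts in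
every coordinate. -/
noncomputable def repValue {r : ℕ} {Q A : Fin r → Type} [∀ j, DecidableEq (Q j)]
    (n : ℕ) (Qbar : Finset (∀ j, Q j)) (V : (∀ j, Q j) → (∀ j, A j) → Bool) : ℝ :=
  sSup { x : ℝ | ∃ S : ∀ j, (Fin n → Q j) → (Fin n → A j),
    x = (((Fintype.piFinset fun _ : Fin n => Qbar).filter fun q =>
          ∀ i, V (q i) (fun j => S j (fun i' => q i' j) i) = true).card : ℝ) /
        ((Fintype.piFinset fun _ : Fin n => Qbar).card : ℝ) }

/-- The question set `Q̄_r ⊆ {0,1}^r`: tuples with exactly one coordinate equal to 1. -/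
def QbarR (r : ℕ) : Finset (Fin r → Bool) :=
  Finset.univ.filter fun q => (Finset.univ.filter fun j => q j = true).card = 1

/-- The point of a combinatorial pattern `b` (wildcard = `none`) at `q`. -/
def patternLine {r n : ℕ} (b : Fin n → Option (Fin r)) (q : Fin r) : Fin n → Fin r :=
  fun i => (b i).getD q

/-- `S ⊆ [r]^n` contains a combinatorial line. -/
def HasCombLine {r n : ℕ} (S : Set (Fin n → Fin r)) : Prop :=
  ∃ b : Fin n → Option (Fin r), (∃ i, b i = none) ∧ ∀ q : Fin r, patternLine b q ∈ S

def basisQuestion {r : ℕ} (k : Fin r) : Fin r → Bool := fun j => decide (j = k)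

@[simp] lemma basisQuestion_apply {r : ℕ} (k j : Fin r) : basisQuestion k j = decide (j = k) := rfl

lemma basisQuestion_injective {r : ℕ} : Function.Injective (basisQuestion (r := r)) := by
  intro k k' h
  simpa using congrFun h k

lemma QbarR_eq_image {r : ℕ} : QbarR r = Finset.univ.image basisQuestion := by
  ext q
  simp only [QbarR, Finset.card_eq_one, Finset.mem_filter, Finset.mem_univ, true_and,
    Finset.mem_image, Finset.eq_singleton_iff_unique_mem]
  constructor
  · rintro ⟨k, hk, huniq⟩
    refine ⟨k, funext fun j => ?_⟩
    by_cases hj : j = k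
    · simpa [hj] using hk
    · simpa [hj] using mt (huniq j) hj
  · rintro ⟨k, rfl⟩
    exact ⟨k, by simp⟩

lemma basisQuestion_mem_QbarR {r : ℕ} (k : Fin r) : basisQuestion k ∈ QbarR r := by
  rw [QbarR_eq_image]; exact Finset.mem_image_of_mem _ (Finset.mem_univ k)

lemma card_QbarR (r : ℕ) : (QbarR r).card = r := by
  rw [QbarR_eq_image, Finset.card_image_of_injective _ basisQuestion_injective]
  simp

structure LineGameAccepts {r n : ℕ} (S : Finset (Fin n → Fin r)) (q : Fin r → Bool)
    (a : Fin r → Finset (Fin n) × Fin n) : Prop where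
  index_eq : ∀ j j', (a j).2 = (a j').2
  index_mem_iff : ∀ j, (a j).2 ∈ (a j).1 ↔ q j = true
  existsUnique_mem : ∀ i, ∃! j, i ∈ (a j).1
  mem_of_forall_mem : ∀ τ : Fin n → Fin r, (∀ i, i ∈ (a (τ i)).1) → τ ∈ S

open Classical in
noncomputable def lineGame {r n : ℕ} (S : Finset (Fin n → Fin r)) (q : Fin r → Bool)
    (a : Fin r → Finset (Fin n) × Fin n) : Bool :=
  decide (LineGameAccepts S q a)

lemma lineGame_eq_true {r n : ℕ} {S : Finset (Fin n → Fin r)} {q : Fin r → Bool}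
    {a : Fin r → Finset (Fin n) × Fin n} : lineGame S q a = true ↔ LineGameAccepts S q a := by
  simp [lineGame]

def WinsBasisQuestions {r n : ℕ} (S : Finset (Fin n → Fin r))
    (T : Fin r → Bool → Finset (Fin n) × Fin n) : Prop :=
  ∀ k, LineGameAccepts S (basisQuestion k) (fun j => T j (basisQuestion k j))

open Classical in
noncomputable def strategyPattern {r n : ℕ} (T : Fin r → Bool → Finset (Fin n) × Fin n) :
    Fin n → Option (Fin r) :=
  fun i => if h : ∃ j, i ∈ (T j false).1 then some h.choose else none

namespace WinsBasisQuestions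

variable {r n : ℕ} {S : Finset (Fin n → Fin r)} {T : Fin r → Bool → Finset (Fin n) × Fin n}

-- As `r ≥ 3`, provers `j, j'` can be compared on a question `k ∉ {j, j'}`, where both are asked `false`.
lemma index_false_eq (H : WinsBasisQuestions S T) (hr : 3 ≤ r) (j j' : Fin r) :
    (T j false).2 = (T j' false).2 := by
  obtain ⟨k, hkj, hkj'⟩ := Fin.exists_ne_and_ne_of_two_lt j j' (by omega)
  simpa [hkj.symm, hkj'.symm] using (H k).index_eq j j'

lemma index_false_notMem (H : WinsBasisQuestions S T) (hr : 3 ≤ r) (j : Fin r) :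
    (T j false).2 ∉ (T j false).1 := by
  obtain ⟨k, hkj, -⟩ := Fin.exists_ne_and_ne_of_two_lt j j (by omega)
  simpa [hkj.symm] using (H k).index_mem_iff j

lemma eq_of_mem_false (H : WinsBasisQuestions S T) (hr : 3 ≤ r) {i : Fin n} {j j' : Fin r}
    (hj : i ∈ (T j false).1) (hj' : i ∈ (T j' false).1) : j = j' := by
  obtain ⟨k, hkj, hkj'⟩ := Fin.exists_ne_and_ne_of_two_lt j j' (by omega)
  obtain ⟨w, -, hw⟩ := (H k).existsUnique_mem i
  exact (hw j (by simpa [hkj.symm])).trans (hw j' (by simpa [hkj'.symm])).symm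

lemma mem_true_of_forall_notMem_false (H : WinsBasisQuestions S T) (k : Fin r) {i : Fin n}
    (hi : ∀ j ≠ k, i ∉ (T j false).1) : i ∈ (T k true).1 := by
  obtain ⟨w, hw, -⟩ := (H k).existsUnique_mem i
  by_cases hwk : w = k
  · subst hwk
    simpa using hw
  · exact absurd (by simpa [hwk] using hw) (hi w hwk)

lemma mem_answer_patternLine (H : WinsBasisQuestions S T) (hr : 3 ≤ r) (k : Fin r) (i : Fin n) :
    i ∈ (T (patternLine (strategyPattern T) k i)
      (basisQuestion k (patternLine (strategyPattern T) k i))).1 := by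
  by_cases h : ∃ j, i ∈ (T j false).1
  · have hpat : patternLine (strategyPattern T) k i = h.choose := by
      simp [patternLine, strategyPattern, h]
    rw [hpat]
    by_cases hk : h.choose = k
    · rw [hk]
      simpa using H.mem_true_of_forall_notMem_false k fun j hjk hj =>
        hjk ((H.eq_of_mem_false hr hj h.choose_spec).trans hk)
    · simpa [hk] using h.choose_spec
  · have hpat : patternLine (strategyPattern T) k i = k := by
      simp [patternLine, strategyPattern, h]
    rw [hpat]
    simpa using H.mem_true_of_forall_notMem_false k fun j _ hj => h ⟨j, hj⟩

lemma hasCombLine (H : WinsBasisQuestions S T) (hr : 3 ≤ r) :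
    HasCombLine (S : Set (Fin n → Fin r)) := by
  refine ⟨strategyPattern T, ⟨(T ⟨0, by omega⟩ false).2, ?_⟩, fun k =>
    (H k).mem_of_forall_mem _ (H.mem_answer_patternLine hr k)⟩
  have hwildcard : ∀ j, (T ⟨0, by omega⟩ false).2 ∉ (T j false).1 := fun j => by
    simpa [H.index_false_eq hr _ j] using H.index_false_notMem hr j
  simp [strategyPattern, hwildcard]

end WinsBasisQuestions

section Values

variable {r : ℕ} {Q A : Fin r → Type}

lemma gameValue_le_of_forall_exists_reject (Qbar : Finset (∀ j, Q j))
    (V : (∀ j, Q j) → (∀ j, A j) → Bool)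
    (h : ∀ σ : ∀ j, Q j → A j, ∃ q ∈ Qbar, V q (fun j => σ j (q j)) = false) :
    gameValue Qbar V ≤ 1 - 1 / (Qbar.card : ℝ) := by
  have hnonneg : 0 ≤ 1 - 1 / (Qbar.card : ℝ) := by
    simpa using Nat.cast_inv_le_one (α := ℝ) Qbar.card
  refine Real.sSup_le ?_ hnonneg
  rintro x ⟨σ, rfl⟩
  obtain ⟨q, hq, hreject⟩ := h σ
  have hlt : (Qbar.filter fun q => V q (fun j => σ j (q j)) = true).card < Qbar.card :=
    Finset.card_lt_card <| Finset.filter_ssubset.mpr ⟨q, hq, by simp [hreject]⟩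
  have hpos : (0 : ℝ) < Qbar.card := by exact_mod_cast (Nat.zero_le _).trans_lt hlt
  rw [one_sub_div hpos.ne', div_le_div_iff_of_pos_right hpos, le_sub_iff_add_le]
  exact_mod_cast hlt

lemma le_repValue [∀ j, DecidableEq (Q j)] (n : ℕ) (Qbar : Finset (∀ j, Q j))
    (V : (∀ j, Q j) → (∀ j, A j) → Bool) (σ : ∀ j, (Fin n → Q j) → (Fin n → A j)) :
    (((Fintype.piFinset fun _ : Fin n => Qbar).filter fun q =>
          ∀ i, V (q i) (fun j => σ j (fun i' => q i' j) i) = true).card : ℝ) /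
        ((Fintype.piFinset fun _ : Fin n => Qbar).card : ℝ) ≤ repValue n Qbar V := by
  refine le_csSup ⟨1, ?_⟩ ⟨σ, rfl⟩
  rintro x ⟨τ, rfl⟩
  exact div_le_one_of_le₀ (by exact_mod_cast Finset.card_filter_le _ _) (by positivity)

end Values

def honestStrategy (r n : ℕ) : Fin r → (Fin n → Bool) → (Fin n → Finset (Fin n) × Fin n) :=
  fun _ E i => (Finset.univ.filter (E · = true), i)

lemma lineGame_honestStrategy {r n : ℕ} {S : Finset (Fin n → Fin r)} {σ : Fin n → Fin r}
    (hσ : σ ∈ S) (i : Fin n) :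
    lineGame S (basisQuestion (σ i))
      (fun j => honestStrategy r n j (fun i' => basisQuestion (σ i') j) i) = true := by
  rw [lineGame_eq_true]
  refine ⟨fun _ _ => rfl, fun j => by simp [honestStrategy, eq_comm],
    fun i' => ⟨σ i', by simp [honestStrategy], fun j hj => by simpa [honestStrategy] using hj⟩,
    fun τ hτ => ?_⟩
  obtain rfl : τ = σ := funext fun i' => by simpa [honestStrategy] using hτ i'
  exact hσ

lemma card_le_card_accepted_honestStrategy {r n : ℕ} (S : Finset (Fin n → Fin r)) :
    S.card ≤ ((Fintype.piFinset fun _ : Fin n => QbarR r).filter fun q =>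
      ∀ i, lineGame S (q i) (fun j => honestStrategy r n j (fun i' => q i' j) i) = true).card := by
  refine Finset.card_le_card_of_injOn (fun σ i => basisQuestion (σ i)) (fun σ hσ => ?_)
    (basisQuestion_injective.comp_left.injOn)
  simp only [Finset.coe_filter, Set.mem_ofPred_eq, Fintype.mem_piFinset]
  exact ⟨fun i => basisQuestion_mem_QbarR (σ i), lineGame_honestStrategy hσ⟩

theorem statement0_general (r n : ℕ) (hr : 3 ≤ r)
    (S : Finset (Fin n → Fin r)) (hS : ¬ HasCombLine (↑S : Set (Fin n → Fin r))) :
    ∃ V : (Fin r → Bool) → (Fin r → Finset (Fin n) × Fin n) → Bool,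
      gameValue (QbarR r) V ≤ 1 - 1 / (r : ℝ) ∧
      (S.card : ℝ) / (r : ℝ) ^ n ≤ repValue n (QbarR r) V := by
  refine ⟨lineGame S, ?_, ?_⟩
  · have hreject : ∀ T : Fin r → Bool → Finset (Fin n) × Fin n,
        ∃ q ∈ QbarR r, lineGame S q (fun j => T j (q j)) = false := by
      intro T
      by_contra! hwin
      refine hS (WinsBasisQuestions.hasCombLine (T := T) (fun k => ?_) hr)
      exact lineGame_eq_true.mp (by simpa using hwin _ (basisQuestion_mem_QbarR k))
    simpa only [card_QbarR] using gameValue_le_of_forall_exists_reject _ _ hreject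
  · refine le_trans ?_ (le_repValue n (QbarR r) (lineGame S) (honestStrategy r n))
    rw [Fintype.card_piFinset, Finset.prod_const, Finset.card_univ, Fintype.card_fin, card_QbarR]
    push_cast
    gcongr
    exact_mod_cast card_le_card_accepted_honestStrategy S

/-- If `r ≥ 3`, `n ≥ 1` and `S ⊆ [r]^n` contains no combinatorial line, then there is an
`r`-prover game with question set `Q̄_r` and all answer alphabets `2^[n] × [n]` whose value
is at most `1 - 1/r` and whose `n`-fold repeated value is at least `μ(S) = |S|/rⁿ`. -/
theorem statement0 (r n : ℕ) (hr : 3 ≤ r) (hn : 1 ≤ n)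
    (S : Finset (Fin n → Fin r)) (hS : ¬ HasCombLine (↑S : Set (Fin n → Fin r))) :
    ∃ V : (Fin r → Bool) → (Fin r → Finset (Fin n) × Fin n) → Bool,
      gameValue (QbarR r) V ≤ 1 - 1 / (r : ℝ) ∧
      (S.card : ℝ) / (r : ℝ) ^ n ≤ repValue n (QbarR r) V :=
  statement0_general r n hr S hS
end

section
/- Let r ≥ 3. The question set Q̄_r does not admit exponential parallel repetition: for every constant C < 1 there exists n ∈ ℕ with ω_{Q̄_r}(n) > C^n. -/
/-- `ω_Q̄(n)`: the supremum of `val(Gⁿ)` over all non-trivial games `G` with question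
set `Qbar` (quantifying over all finite nonempty answer alphabets and all verifiers). -/
noncomputable def omegaQ {r : ℕ} {Q : Fin r → Type} [∀ j, DecidableEq (Q j)]
    (Qbar : Finset (∀ j, Q j)) (n : ℕ) : ℝ :=
  sSup { x : ℝ | ∃ (A : Fin r → Type) (_ : ∀ j, Fintype (A j)) (_ : ∀ j, Nonempty (A j))
    (V : (∀ j, Q j) → (∀ j, A j) → Bool),
      gameValue Qbar V ≠ 1 ∧ x = repValue n Qbar V }
/-!
Fix a prover `c`, a size `b` and a length `n`. In the game below every cold prover (one receiving
`0`; the others are hot) answers a set of coordinates in `Fin n` together with one coordinate;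
the cold sets must be disjoint and avoid the cold provers' coordinates, and the sizes must be
consistent with `c` owning exactly `b` coordinates. In one round a prover's answer when cold is a
single fixed answer, so these constraints force `r` disjoint sets of total size `n` inside `n - 1`
coordinates, and the game is non-trivial (this needs a hot prover outside any two given ones, i.e.
`r ≥ 3`). In the `n`-fold repetition each prover sees the coordinates where it is hot and answers
exactly those, which wins whenever `c` is hot in exactly `b` coordinates; for the most likely `b`
this has probability at least `1 / (n + 1)`, which is not exponentially small.
-/

open Finset

namespace ParallelRepetition

section Values

variable {r : ℕ} {Q A : Fin r → Type}

lemma card_filter_div_card_le_one {α : Type*} (s : Finset α) (p : α → Prop) [DecidablePred p] :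
    ((s.filter p).card : ℝ) / s.card ≤ 1 :=
  div_le_one_of_le₀ (by exact_mod_cast card_filter_le s p) (Nat.cast_nonneg _)

theorem gameValue_lt_one {Qbar : Finset (∀ j, Q j)} {V : (∀ j, Q j) → (∀ j, A j) → Bool}
    (hQ : Qbar.Nonempty) (hV : ∀ S : ∀ j, Q j → A j, ∃ q ∈ Qbar, V q (fun j => S j (q j)) = false) :
    gameValue Qbar V < 1 := by
  have hk : (0 : ℝ) < Qbar.card := by exact_mod_cast hQ.card_pos
  refine (Real.sSup_le (a := 1 - 1 / Qbar.card) ?_ ?_).trans_lt (by simpa using hk)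
  · rintro x ⟨S, rfl⟩
    obtain ⟨q, hq, hlose⟩ := hV S
    have hlt : (Qbar.filter fun q => V q (fun j => S j (q j)) = true).card < Qbar.card :=
      card_lt_card (filter_ssubset.mpr ⟨q, hq, by simp [hlose]⟩)
    have : ((Qbar.filter fun q => V q (fun j => S j (q j)) = true).card : ℝ) + 1 ≤ Qbar.card := by
      exact_mod_cast hlt
    rw [one_sub_div hk.ne', div_le_div_iff_of_pos_right hk]
    linarith
  · rw [sub_nonneg]
    exact div_le_one_of_le₀ (by exact_mod_cast hQ.card_pos) hk.le

variable [∀ j, DecidableEq (Q j)]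

theorem le_repValue (n : ℕ) (Qbar : Finset (∀ j, Q j)) (V : (∀ j, Q j) → (∀ j, A j) → Bool)
    (S : ∀ j, (Fin n → Q j) → (Fin n → A j)) :
    (((Fintype.piFinset fun _ : Fin n => Qbar).filter fun q =>
          ∀ i, V (q i) (fun j => S j (fun i' => q i' j) i) = true).card : ℝ) /
        (Fintype.piFinset fun _ : Fin n => Qbar).card ≤ repValue n Qbar V :=
  le_csSup ⟨1, by rintro x ⟨S, rfl⟩; exact card_filter_div_card_le_one _ _⟩ ⟨S, rfl⟩

theorem repValue_le_one (n : ℕ) (Qbar : Finset (∀ j, Q j))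
    (V : (∀ j, Q j) → (∀ j, A j) → Bool) : repValue n Qbar V ≤ 1 :=
  Real.sSup_le (by rintro x ⟨S, rfl⟩; exact card_filter_div_card_le_one _ _) zero_le_one

theorem repValue_le_omegaQ (n : ℕ) (Qbar : Finset (∀ j, Q j)) [∀ j, Fintype (A j)]
    [∀ j, Nonempty (A j)] (V : (∀ j, Q j) → (∀ j, A j) → Bool) (hV : gameValue Qbar V ≠ 1) :
    repValue n Qbar V ≤ omegaQ Qbar n :=
  le_csSup ⟨1, by rintro _ ⟨A, _, _, V, -, rfl⟩; exact repValue_le_one n Qbar V⟩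
    ⟨A, inferInstance, inferInstance, V, hV, rfl⟩

end Values

section Questions

variable {r : ℕ}

def hot (i : Fin r) : Fin r → Bool := fun j => decide (i = j)

@[simp] lemma hot_eq_true {i j : Fin r} : hot i j = true ↔ i = j := decide_eq_true_iff

@[simp] lemma hot_eq_false {i j : Fin r} : hot i j = false ↔ i ≠ j := decide_eq_false_iff_not

lemma hot_injective : Function.Injective (hot (r := r)) := fun i i' h => by
  simpa [hot] using congrFun h i'

lemma filter_hot_eq_false (i : Fin r) : univ.filter (fun j => hot i j = false) = univ.erase i := by
  ext j
  simp only [mem_filter, mem_univ, true_and, hot_eq_false, mem_erase, and_true, ne_comm]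

lemma mem_QbarR_iff {q : Fin r → Bool} : q ∈ QbarR r ↔ ∃ i, hot i = q := by
  simp only [QbarR, mem_filter, mem_univ, true_and, card_eq_one, Finset.ext_iff, mem_singleton]
  refine exists_congr fun i => ⟨fun h => funext fun j => Bool.eq_iff_iff.mpr ?_, ?_⟩
  · rw [h j, hot_eq_true, eq_comm]
  · rintro rfl j
    rw [hot_eq_true, eq_comm]

lemma hot_mem_QbarR (i : Fin r) : hot i ∈ QbarR r := mem_QbarR_iff.mpr ⟨i, rfl⟩

lemma QbarR_eq_image_hot : QbarR r = univ.image hot := by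
  ext q
  simp [mem_QbarR_iff]

lemma card_QbarR : (QbarR r).card = r := by
  rw [QbarR_eq_image_hot, card_image_of_injective _ hot_injective, card_univ, Fintype.card_fin]

end Questions

section Game

variable {r n : ℕ}

abbrev Answer (n : ℕ) : Type := Finset (Fin n) × Fin n

structure Accepts (b : ℕ) (c : Fin r) (q : Fin r → Bool) (a : Fin r → Answer n) : Prop where
  disjoint : ∀ j j', q j = false → q j' = false → j ≠ j' → Disjoint (a j).1 (a j').1
  not_mem : ∀ j j', q j = false → q j' = false → (a j').2 ∉ (a j).1
  sum_card : q c = true → ∑ j ∈ univ.filter (fun j => q j = false), (a j).1.card + b = n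
  card : q c = false → (a c).1.card = b

open Classical in
noncomputable def verifier (n b : ℕ) (c : Fin r) (q : Fin r → Bool) (a : Fin r → Answer n) :
    Bool :=
  decide (Accepts b c q a)

lemma verifier_eq_true {b : ℕ} {c : Fin r} {q : Fin r → Bool} {a : Fin r → Answer n} :
    verifier n b c q a = true ↔ Accepts b c q a := by
  simp [verifier]

lemma exists_ne_ne (hr : 3 ≤ r) (j j' : Fin r) : ∃ i, i ≠ j ∧ i ≠ j' := by
  by_contra! h
  have : (univ : Finset (Fin r)) ⊆ {j, j'} := fun i _ => by
    by_cases hij : i = j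
    · simp [hij]
    · simp [h i hij]
  have hcard := (card_le_card this).trans card_le_two
  rw [card_univ, Fintype.card_fin] at hcard
  omega

theorem exists_not_accepts (hr : 3 ≤ r) (b : ℕ) (c : Fin r) (S : Fin r → Bool → Answer n) :
    ∃ i, ¬ Accepts b c (hot i) (fun j => S j (hot i j)) := by
  by_contra! hacc
  set Y : Fin r → Finset (Fin n) := fun j => (S j false).1
  have cold {i j : Fin r} (h : i ≠ j) : S j (hot i j) = S j false := by rw [hot_eq_false.mpr h]
  have hdisj : ((univ : Finset (Fin r)) : Set (Fin r)).PairwiseDisjoint Y := fun j _ j' _ hjj' => by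
    obtain ⟨i, hij, hij'⟩ := exists_ne_ne hr j j'
    simpa [Y, cold hij, cold hij'] using
      (hacc i).disjoint j j' (hot_eq_false.mpr hij) (hot_eq_false.mpr hij') hjj'
  have hmiss : ∀ j, (S c false).2 ∉ Y j := fun j => by
    obtain ⟨i, hij, hic⟩ := exists_ne_ne hr j c
    simpa [Y, cold hij, cold hic] using
      (hacc i).not_mem j c (hot_eq_false.mpr hij) (hot_eq_false.mpr hic)
  have hsum : ∑ j ∈ univ.erase c, (Y j).card + b = n := by
    have := (hacc c).sum_card (hot_eq_true.mpr rfl)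
    rwa [filter_hot_eq_false, sum_congr rfl fun j hj => by
      rw [cold (ne_of_mem_erase hj).symm]] at this
  have hc : (Y c).card = b := by
    obtain ⟨i, hic, -⟩ := exists_ne_ne hr c c
    simpa [Y, cold hic] using (hacc i).card (hot_eq_false.mpr hic)
  have hsub : univ.biUnion Y ⊆ univ.erase (S c false).2 := fun p hp => by
    obtain ⟨j, -, hpj⟩ := mem_biUnion.mp hp
    exact mem_erase.mpr ⟨fun h => hmiss j (h ▸ hpj), mem_univ p⟩
  have hcard := card_le_card hsub
  rw [card_biUnion hdisj, ← sum_erase_add _ _ (mem_univ c), card_erase_of_mem (mem_univ _),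
    card_univ, Fintype.card_fin, hc] at hcard
  have hn : 0 < n := Fin.pos (S c false).2
  omega

theorem gameValue_verifier_lt_one (hr : 3 ≤ r) (b : ℕ) (c : Fin r) :
    gameValue (QbarR r) (verifier n b c) < 1 :=
  gameValue_lt_one ⟨hot c, hot_mem_QbarR c⟩ fun S => by
    obtain ⟨i, hi⟩ := exists_not_accepts hr b c S
    exact ⟨hot i, hot_mem_QbarR i, eq_false_of_ne_true (mt verifier_eq_true.mp hi)⟩

end Game

section Repetition

variable {r n : ℕ}

abbrev fiber (h : Fin n → Fin r) (j : Fin r) : Finset (Fin n) := univ.filter fun i => h i = j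

def honestStrategy (x : Fin n → Bool) (i : Fin n) : Answer n :=
  (univ.filter fun i' => x i' = true, i)

lemma accepts_fiber {b : ℕ} {c : Fin r} {h : Fin n → Fin r} (hb : (fiber h c).card = b)
    (i : Fin n) : Accepts b c (hot (h i)) (fun j => (fiber h j, i)) where
  disjoint j j' _ _ hjj' := disjoint_filter.mpr fun _ _ hj hj' => hjj' (hj ▸ hj')
  not_mem j _ hj _ := by simpa using hot_eq_false.mp hj
  sum_card hc := by
    rw [hot_eq_true.mp hc, filter_hot_eq_false]
    change ∑ j ∈ univ.erase c, (fiber h j).card + b = n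
    rw [← hb, sum_erase_add _ _ (mem_univ c)]
    simpa using (card_eq_sum_card_fiberwise (f := h) (s := univ) (t := univ)
      fun _ _ => mem_univ _).symm
  card _ := hb

lemma exists_le_card_filter_card_fiber_eq (c : Fin r) :
    ∃ b, (r : ℝ) ^ n / (n + 1) ≤
      (univ.filter fun h : Fin n → Fin r => (fiber h c).card = b).card := by
  obtain ⟨b, -, hb⟩ := exists_le_card_fiber_of_nsmul_le_card_of_maps_to
    (s := univ) (t := range (n + 1)) (f := fun h : Fin n → Fin r => (fiber h c).card)
    (fun h _ => mem_range.mpr (Nat.lt_succ_of_le ((card_filter_le _ _).trans_eq (card_fin n))))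
    ⟨0, mem_range.mpr n.succ_pos⟩ (b := (r : ℝ) ^ n / (n + 1)) (by
      rw [card_range, nsmul_eq_mul, card_univ, Fintype.card_fun, Fintype.card_fin,
        Fintype.card_fin]
      push_cast
      rw [mul_div_cancel₀ _ (by positivity)])
  exact ⟨b, hb⟩

theorem exists_inv_succ_le_repValue_verifier (hr : 3 ≤ r) (c : Fin r) :
    ∃ b, 1 / ((n : ℝ) + 1) ≤ repValue n (QbarR r) (verifier n b c) := by
  obtain ⟨b, hb⟩ := exists_le_card_filter_card_fiber_eq (n := n) c
  refine ⟨b, le_trans ?_ (le_repValue n (QbarR r) (verifier n b c) fun _ => honestStrategy)⟩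
  have hrn : (0 : ℝ) < (r : ℝ) ^ n := by positivity
  rw [Fintype.card_piFinset, prod_const, card_QbarR, card_univ, Fintype.card_fin, Nat.cast_pow,
    le_div_iff₀ hrn, one_div, inv_mul_eq_div]
  refine hb.trans (Nat.cast_le.mpr (card_le_card_of_injOn (fun h i => hot (h i)) ?_ ?_))
  · intro h hh
    simp only [mem_coe, mem_filter, mem_univ, true_and] at hh
    refine mem_filter.mpr ⟨Fintype.mem_piFinset.mpr fun i => hot_mem_QbarR _, fun i => ?_⟩
    rw [verifier_eq_true]
    convert accepts_fiber hh i using 2 with j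
    refine Prod.ext (Finset.ext fun i' => ?_) rfl
    simp [honestStrategy, hot]
  · intro h _ h' _ hh'
    funext i
    exact hot_injective (congrFun hh' i)

end Repetition

theorem inv_succ_le_omegaQ_QbarR {r : ℕ} (hr : 3 ≤ r) {n : ℕ} (hn : 0 < n) :
    1 / ((n : ℝ) + 1) ≤ omegaQ (QbarR r) n := by
  obtain ⟨b, hb⟩ := exists_inv_succ_le_repValue_verifier (n := n) hr ⟨0, by omega⟩
  have : Nonempty (Answer n) := ⟨(∅, ⟨0, hn⟩)⟩
  exact hb.trans (repValue_le_omegaQ n _ _ (gameValue_verifier_lt_one hr b _).ne)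

lemma exists_pow_lt_inv_succ {C : ℝ} (hC : C < 1) : ∃ n : ℕ, 0 < n ∧ C ^ n < 1 / ((n : ℝ) + 1) := by
  rcases le_or_gt C 0 with hC0 | hC0
  · exact ⟨1, one_pos, by norm_num; linarith⟩
  have hlim : Filter.Tendsto (fun n : ℕ => (n : ℝ) ^ 1 * C ^ n + C ^ n) Filter.atTop (nhds 0) := by
    simpa using (tendsto_pow_const_mul_const_pow_of_abs_lt_one 1 (abs_lt.mpr ⟨by linarith, hC⟩)).add
      (tendsto_pow_atTop_nhds_zero_of_lt_one hC0.le hC)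
  obtain ⟨n, hlt, hn⟩ :=
    ((hlim.eventually_lt_const one_pos).and (Filter.eventually_gt_atTop 0)).exists
  refine ⟨n, hn, ?_⟩
  rw [lt_div_iff₀ (by positivity)]
  linarith [show C ^ n * (n + 1) = (n : ℝ) ^ 1 * C ^ n + C ^ n by ring]

end ParallelRepetition

/-- For `r ≥ 3`, the question set `Q̄_r` does not admit exponential parallel repetition:
for every constant `C < 1` there exists `n` with `ω_{Q̄_r}(n) > Cⁿ`. -/
theorem statement2 (r : ℕ) (hr : 3 ≤ r) (C : ℝ) (hC : C < 1) :
    ∃ n : ℕ, C ^ n < omegaQ (QbarR r) n := by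
  obtain ⟨n, hn, hCn⟩ := ParallelRepetition.exists_pow_lt_inv_succ hC
  exact ⟨n, hCn.trans_le (ParallelRepetition.inv_succ_le_omegaQ_QbarR hr hn)⟩
end

section
/- Let r ≥ 3, n ≥ 1, S ⊆ [r]^n. If S contains a combinatorial line, then the game G_S is trivial, i.e., val(G_S) = 1. -/
/-- The verifier of the game `G_S` (for `S ⊆ [r]^n`) over the question set `Q̄_r`:
each prover answers a pair `(T, z) ∈ 2^[n] × [n]`; the verifier accepts iff all the
`z`'s agree, the special prover's `z` lies in its set `T`, and the sets `T⁽¹⁾,…,T⁽ʳ⁾`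
form a partition of `[n]` whose induced string (sending `i` to the unique `j` with
`i ∈ T⁽ʲ⁾`) belongs to `S`. -/
def VS {r n : ℕ} (S : Finset (Fin n → Fin r)) (q : Fin r → Bool)
    (ans : Fin r → Finset (Fin n) × Fin n) : Bool :=
  decide ((∀ j j' : Fin r, (ans j).2 = (ans j').2) ∧
    (∀ a : Fin r, q a = true → (ans a).2 ∈ (ans a).1) ∧
    (∃ s : Fin n → Fin r, s ∈ S ∧ ∀ (i : Fin n) (j : Fin r), s i = j ↔ i ∈ (ans j).1))

/-!
Fix a line pattern `b` in `S` and a wildcard coordinate `z`. Every prover answers `z`, and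
prover `j` claims the fixed coordinates `i` with `b i = j`; the special prover `a` additionally
claims all wildcard coordinates. The claimed sets then partition `[n]` into the string
`b(a) ∈ S`, and the special prover's set contains `z`, so this strategy wins on every question.
-/

theorem gameValue_eq_one_of_forall_accept {r : ℕ} {Q A : Fin r → Type}
    {Qbar : Finset (∀ j, Q j)} {V : (∀ j, Q j) → (∀ j, A j) → Bool} (hQ : Qbar.Nonempty)
    (St : ∀ j, Q j → A j) (hSt : ∀ q ∈ Qbar, V q (fun j => St j (q j)) = true) :
    gameValue Qbar V = 1 := by
  have hcard : (0 : ℝ) < Qbar.card := by exact_mod_cast hQ.card_pos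
  refine IsGreatest.csSup_eq ⟨⟨St, ?_⟩, ?_⟩
  · rw [Finset.filter_true_of_mem hSt, div_self hcard.ne']
  · rintro x ⟨T, rfl⟩
    rw [div_le_one hcard]
    exact_mod_cast Finset.card_filter_le _ _

theorem mem_QbarR_iff {r : ℕ} {q : Fin r → Bool} :
    q ∈ QbarR r ↔ ∃ a, ∀ j, q j = true ↔ j = a := by
  simp [QbarR, Finset.card_eq_one, Finset.ext_iff]

theorem QbarR_nonempty {r : ℕ} (hr : 0 < r) : (QbarR r).Nonempty :=
  ⟨fun j => decide (j = ⟨0, hr⟩), mem_QbarR_iff.2 ⟨⟨0, hr⟩, by simp⟩⟩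

def lineStrategy {r n : ℕ} (b : Fin n → Option (Fin r)) (z : Fin n) (j : Fin r)
    (special : Bool) : Finset (Fin n) × Fin n :=
  (Finset.univ.filter fun i => b i = some j ∨ (special = true ∧ b i = none), z)

theorem VS_lineStrategy {r n : ℕ} {S : Finset (Fin n → Fin r)} {b : Fin n → Option (Fin r)}
    (hb : ∀ a, patternLine b a ∈ S) {z : Fin n} (hz : b z = none) {q : Fin r → Bool}
    (hq : q ∈ QbarR r) : VS S q (fun j => lineStrategy b z j (q j)) = true := by
  obtain ⟨a, hqa⟩ := mem_QbarR_iff.1 hq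
  rw [VS, decide_eq_true_eq]
  refine ⟨fun _ _ => rfl, fun j hj => ?_, patternLine b a, hb a, fun i j => ?_⟩
  · simp [lineStrategy, hj, hz]
  · cases hbi : b i <;> simp [lineStrategy, patternLine, hbi, hqa, eq_comm]

theorem statement4_general (r n : ℕ) (hr : 3 ≤ r)
    (S : Finset (Fin n → Fin r)) (hline : HasCombLine (↑S : Set (Fin n → Fin r))) :
    gameValue (QbarR r) (VS S) = 1 := by
  obtain ⟨b, ⟨z, hz⟩, hb⟩ := hline
  exact gameValue_eq_one_of_forall_accept (QbarR_nonempty (by omega)) (lineStrategy b z)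
    fun q hq => VS_lineStrategy hb hz hq

/-- If `S ⊆ [r]^n` contains a combinatorial line (with `r ≥ 3`, `n ≥ 1`),
then the game `G_S` is trivial. -/
theorem statement4 (r n : ℕ) (hr : 3 ≤ r) (hn : 1 ≤ n)
    (S : Finset (Fin n → Fin r)) (hline : HasCombLine (↑S : Set (Fin n → Fin r))) :
    gameValue (QbarR r) (VS S) = 1 :=
  statement4_general r n hr S hline
end

section
/- Let r ≥ 3, n ≥ 1, S ⊆ [r]^n. If the game G_S is trivial (val(G_S) = 1), then S contains a combinatorial line. -/
/-!
Fix a perfect strategy and let `(T_j, z_j)` be prover `j`'s answer when it is not special. Since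
`r ≥ 3`, any two provers `j ≠ j'` are both non-special in some round, so the sets `T_j`
are pairwise disjoint and all `z`'s agree on one coordinate `z`, which lies in no `T_j`.
In the round where `a` is special, the accepted string takes the value `j` on `T_j` for
`j ≠ a` and, by disjointness, the value `a` everywhere else; so these `r` strings form the
combinatorial line whose fixed coordinates are given by the `T_j` and whose wildcards
include `z`.
-/

open Finset Function

lemma exists_forall_accept_of_gameValue_eq_one {r : ℕ} {Q A : Fin r → Type}
    {Qbar : Finset (∀ j, Q j)} {V : (∀ j, Q j) → (∀ j, A j) → Bool}
    (h : gameValue Qbar V = 1) :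
    ∃ S : ∀ j, Q j → A j, ∀ q ∈ Qbar, V q (fun j => S j (q j)) = true := by
  set values := { x : ℝ | ∃ S : ∀ j, Q j → A j,
    x = ((Qbar.filter fun q => V q (fun j => S j (q j)) = true).card : ℝ) / Qbar.card }
  change sSup values = 1 at h
  -- every value is `k / |Qbar|` for some `k ≤ |Qbar|`, so the supremum is attained
  have hfin : values.Finite := by
    refine ((Set.finite_Iic Qbar.card).image fun k : ℕ => (k : ℝ) / Qbar.card).subset ?_
    rintro _ ⟨S, rfl⟩
    exact ⟨_, Set.mem_Iic.2 (card_filter_le _ _), rfl⟩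
  have hne : values.Nonempty :=
    Set.nonempty_iff_ne_empty.2 fun he => by simp [he] at h
  obtain ⟨S, hS⟩ := h ▸ hne.csSup_mem hfin
  have hcard : (Qbar.card : ℝ) ≠ 0 := fun h0 => by simp [h0] at hS
  refine ⟨S, card_filter_eq_iff.1 ?_⟩
  exact_mod_cast ((div_eq_one_iff_eq hcard).1 hS.symm)

def specialQuestion {r : ℕ} (a : Fin r) : Fin r → Bool := fun j => decide (j = a)

lemma specialQuestion_mem_QbarR {r : ℕ} (a : Fin r) : specialQuestion a ∈ QbarR r := by
  simp [QbarR, specialQuestion, filter_eq']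

open Classical in
noncomputable def partitionPattern {r n : ℕ} (T : Fin r → Finset (Fin n)) :
    Fin n → Option (Fin r) :=
  fun i => if h : ∃ j, i ∈ T j then some h.choose else none

section partitionPattern

variable {r n : ℕ} {T : Fin r → Finset (Fin n)}

lemma partitionPattern_eq_none {i : Fin n} (hi : ∀ j, i ∉ T j) : partitionPattern T i = none :=
  dif_neg (not_exists.2 hi)

lemma patternLine_partitionPattern (hT : Pairwise (Disjoint on T)) {a : Fin r}
    {s : Fin n → Fin r} (hs : ∀ i, ∀ j ≠ a, s i = j ↔ i ∈ T j) :
    patternLine (partitionPattern T) a = s := by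
  funext i
  by_cases h : ∃ j, i ∈ T j
  · have hj : i ∈ T h.choose := h.choose_spec
    simp only [patternLine, partitionPattern, dif_pos h, Option.getD_some]
    by_contra hne
    by_cases hsa : s i = a
    · exact hne ((hs i _ (hsa ▸ hne)).2 hj).symm
    · exact disjoint_left.1 (hT hne) hj ((hs i _ hsa).1 rfl)
  · simp only [patternLine, partitionPattern, dif_neg h, Option.getD_none]
    by_contra hne
    exact h ⟨s i, (hs i _ (Ne.symm hne)).1 rfl⟩

end partitionPattern

section perfectStrategy

variable {r n : ℕ} {S : Finset (Fin n → Fin r)} {St : Fin r → Bool → Finset (Fin n) × Fin n}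

lemma of_VS_specialQuestion {a : Fin r}
    (h : VS S (specialQuestion a) (fun j => St j (specialQuestion a j)) = true) :
    (∀ j ≠ a, (St j false).2 = (St a true).2) ∧ (St a true).2 ∈ (St a true).1 ∧
      ∃ s ∈ S, (∀ i, s i = a ↔ i ∈ (St a true).1) ∧
        ∀ i, ∀ j ≠ a, s i = j ↔ i ∈ (St j false).1 := by
  simp only [VS, specialQuestion, decide_eq_true_eq] at h
  obtain ⟨hz, hmem, s, hsS, hs⟩ := h
  exact ⟨fun j hj => by simpa [hj] using hz j a, by simpa using hmem a, s, hsS,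
    fun i => by simpa using hs i a, fun i j hj => by simpa [hj] using hs i j⟩

lemma pairwise_disjoint_fst_false (hr : 3 ≤ r)
    (hwin : ∀ a, VS S (specialQuestion a) (fun j => St j (specialQuestion a j)) = true) :
    Pairwise (Disjoint on fun j => (St j false).1) := by
  intro j j' hjj'
  obtain ⟨a, haj, haj'⟩ := Fin.exists_ne_and_ne_of_two_lt j j' hr
  obtain ⟨-, -, s, -, -, hs⟩ := of_VS_specialQuestion (hwin a)
  refine disjoint_left.2 fun i hi hi' => hjj' ?_
  exact ((hs i j haj.symm).2 hi).symm.trans ((hs i j' haj'.symm).2 hi')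

lemma snd_true_eq_snd_true (hr : 3 ≤ r)
    (hwin : ∀ a, VS S (specialQuestion a) (fun j => St j (specialQuestion a j)) = true)
    (a a' : Fin r) : (St a true).2 = (St a' true).2 := by
  obtain ⟨j, hja, hja'⟩ := Fin.exists_ne_and_ne_of_two_lt a a' hr
  exact ((of_VS_specialQuestion (hwin a)).1 j hja).symm.trans
    ((of_VS_specialQuestion (hwin a')).1 j hja')

lemma snd_true_notMem_fst_false (hr : 3 ≤ r)
    (hwin : ∀ a, VS S (specialQuestion a) (fun j => St j (specialQuestion a j)) = true)
    (a j : Fin r) : (St a true).2 ∉ (St j false).1 := by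
  intro hmem
  obtain ⟨b, hbj, -⟩ := Fin.exists_ne_and_ne_of_two_lt j j hr
  obtain ⟨-, hzb, s, -, hsb, hs⟩ := of_VS_specialQuestion (hwin b)
  rw [snd_true_eq_snd_true hr hwin a b] at hmem
  exact hbj (((hsb _).2 hzb).symm.trans ((hs _ j hbj.symm).2 hmem))

theorem hasCombLine_of_forall_VS_specialQuestion (hr : 3 ≤ r)
    (hwin : ∀ a, VS S (specialQuestion a) (fun j => St j (specialQuestion a j)) = true) :
    HasCombLine (↑S : Set (Fin n → Fin r)) := by
  have hr0 : 0 < r := by omega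
  refine ⟨partitionPattern fun j => (St j false).1,
    ⟨(St ⟨0, hr0⟩ true).2, partitionPattern_eq_none (snd_true_notMem_fst_false hr hwin _)⟩,
    fun a => ?_⟩
  obtain ⟨-, -, s, hsS, -, hs⟩ := of_VS_specialQuestion (hwin a)
  rw [patternLine_partitionPattern (pairwise_disjoint_fst_false hr hwin) hs]
  exact hsS

end perfectStrategy

theorem statement5_general (r n : ℕ) (hr : 3 ≤ r)
    (S : Finset (Fin n → Fin r)) (htriv : gameValue (QbarR r) (VS S) = 1) :
    HasCombLine (↑S : Set (Fin n → Fin r)) := by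
  obtain ⟨St, hSt⟩ := exists_forall_accept_of_gameValue_eq_one htriv
  exact hasCombLine_of_forall_VS_specialQuestion hr fun a =>
    hSt _ (specialQuestion_mem_QbarR a)

/-- If the game `G_S` is trivial (with `r ≥ 3`, `n ≥ 1`), then `S ⊆ [r]^n`
contains a combinatorial line. -/
theorem statement5 (r n : ℕ) (hr : 3 ≤ r) (hn : 1 ≤ n)
    (S : Finset (Fin n → Fin r)) (htriv : gameValue (QbarR r) (VS S) = 1) :
    HasCombLine (↑S : Set (Fin n → Fin r)) :=
  statement5_general r n hr S htriv
end

section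
/- Let r ≥ 3 and let S ⊆ Q̄_r^n, where Q̄_r^n is identified with [r]^n via the bijection between the hyperedges of Q̄_r and [r]. If there exists a vector of homomorphisms of Q̄_r that is good for S, then S contains a combinatorial line. -/
/-!
Goodness provides, for each letter `a`, a word `w_a ∈ S` with `f_i(e_a) = e_{w_a(i)}`. For `j ≠ a`
the `j`-th bit of `f_i(e_a)` is `f_i^{(j)}(0)`, independent of `a`, so whether `w_a(i) = j` is the
same for all `a ≠ j`. With `r ≥ 3` this forces `a ↦ w_a(i)` to be the identity or constant, and it
is the identity where `f_i = Id`. Hence the `w_a` are the points of a combinatorial line whose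
wildcards are the identity coordinates.
-/

lemma indicator_mem_QbarR {r : ℕ} (a : Fin r) : (fun j => decide (j = a)) ∈ QbarR r := by
  simp [QbarR, Finset.filter_eq']

lemma eq_id_or_exists_const_of_three_le_card {α : Type*} (hα : 3 ≤ ENat.card α) (σ : α → α)
    (h : ∀ j a a', a ≠ j → a' ≠ j → σ a = j → σ a' = j) :
    σ = id ∨ ∃ c, ∀ a, σ a = c := by
  by_contra! hne
  obtain ⟨a, ha⟩ : ∃ a, σ a ≠ a := by simpa [funext_iff] using hne.1
  have hconst : ∀ a', a' ≠ σ a → σ a' = σ a := fun a' h' => h _ a a' (Ne.symm ha) h' rfl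
  obtain ⟨d, hd⟩ := hne.2 (σ a)
  have hdσ : d = σ a := by_contra fun h' => hd (hconst d h')
  subst hdσ
  obtain ⟨z, hz, hz'⟩ := ENat.exists_ne_ne_of_three_le hα (σ a) (σ (σ a))
  exact hd ((h _ (σ a) z hd.symm hz' rfl).symm.trans (hconst z hz))

lemma hasCombLine_of_coord_eq_id_or_const {r n : ℕ} (hr : 1 < r) {S : Set (Fin n → Fin r)}
    {w : Fin r → Fin n → Fin r} (hwS : ∀ a, w a ∈ S)
    (hcoord : ∀ i, (fun a => w a i) = id ∨ ∃ c, ∀ a, w a i = c)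
    (hid : ∃ i, (fun a => w a i) = id) :
    HasCombLine S := by
  classical
  have : Nontrivial (Fin r) := Fin.nontrivial_iff_two_le.mpr hr
  refine ⟨fun i => if h : ∃ c, ∀ a, w a i = c then some h.choose else none, ?_, fun a => ?_⟩
  · obtain ⟨i, hi⟩ := hid
    refine ⟨i, dif_neg ?_⟩
    rintro ⟨c, hc⟩
    obtain ⟨a, hac⟩ := exists_ne c
    exact hac ((congrFun hi a).symm.trans (hc a))
  · convert hwS a using 1
    funext i
    by_cases h : ∃ c, ∀ a, w a i = c
    · simp [patternLine, h, (h.choose_spec a).symm]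
    · simpa [patternLine, h] using (congrFun ((hcoord i).resolve_right h) a).symm

theorem statement8_general (r n : ℕ) (hr : 3 ≤ r) (S : Set (Fin n → Fin r))
    (f : Fin n → ∀ _ : Fin r, Bool → Bool)
    (hid : ∃ i, ∀ j, f i j = id)
    (hgood : ∀ q ∈ QbarR r, ∃ s ∈ S,
      ∀ i, (fun j => f i j (q j)) = fun j => decide (j = s i)) :
    HasCombLine S := by
  choose w hwS hw using fun a : Fin r => hgood _ (indicator_mem_QbarR a)
  have hw' : ∀ a i j, f i j (decide (j = a)) = decide (j = w a i) :=
    fun a i j => congrFun (hw a i) j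
  refine hasCombLine_of_coord_eq_id_or_const (by omega) hwS (fun i => ?_) ?_
  · refine eq_id_or_exists_const_of_three_le_card (by simpa using hr) _ fun j a a' ha ha' h => ?_
    have h₁ := hw' a i j
    have h₂ := hw' a' i j
    rw [decide_eq_false (Ne.symm ha)] at h₁
    rw [decide_eq_false (Ne.symm ha'), h₁] at h₂
    simpa [h, eq_comm] using h₂
  · obtain ⟨i, hi⟩ := hid
    exact ⟨i, funext fun a => by simpa [hi, eq_comm] using hw' a i a⟩

/-- Let `r ≥ 3` and `S ⊆ [r]^n` (identifying the hyperedge of `Q̄_r` whose unique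
`true`-coordinate is `a` with `a ∈ [r]`). If there is a vector `f = (f_1,…,f_n)` of
homomorphisms of `Q̄_r` that is good for `S` — i.e. each `f i` maps `Q̄_r` into `Q̄_r`,
some `f i` is the identity, and the image of every hyperedge of `Q̄_r` under `f`
(read back in `[r]^n`) lies in `S` — then `S` contains a combinatorial line. -/
theorem statement8 (r n : ℕ) (hr : 3 ≤ r) (S : Set (Fin n → Fin r))
    (f : Fin n → ∀ _ : Fin r, Bool → Bool)
    (hhom : ∀ i, ∀ q ∈ QbarR r, (fun j => f i j (q j)) ∈ QbarR r)
    (hid : ∃ i, ∀ j, f i j = id)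
    (hgood : ∀ q ∈ QbarR r, ∃ s ∈ S,
      ∀ i, (fun j => f i j (q j)) = fun j => decide (j = s i)) :
    HasCombLine S :=
  statement8_general r n hr S f hid hgood
end

section
/- Let Q̄ be an r-prover question set. For every n ≥ 1, ω_Q̄(n) ≤ ω^good_Q̄(n): the maximum of val(G^n) over non-trivial games G with question set Q̄ is at most inf{ε : Q̄ is (n,ε)-good}. -/
/-- `f` is a homomorphism of the question set `Qbar` (a tuple of maps, one per
prover, sending every hyperedge of `Qbar` to a hyperedge of `Qbar`). -/
def QHom {r : ℕ} {Q : Fin r → Type} (Qbar : Finset (∀ j, Q j))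
    (f : ∀ j, Q j → Q j) : Prop :=
  ∀ q ∈ Qbar, (fun j => f j (q j)) ∈ Qbar

/-- A vector `f = (f_1, …, f_n)` of homomorphisms of `Qbar` is good for
`S ⊆ Q̄ⁿ` if the image of every hyperedge under `f` lies in `S` and some `f i`
is the identity. -/
def GoodFor {r : ℕ} {Q : Fin r → Type} (Qbar : Finset (∀ j, Q j)) {n : ℕ}
    (S : Finset (Fin n → ∀ j, Q j)) (f : Fin n → ∀ j, Q j → Q j) : Prop :=
  (∀ i, QHom Qbar (f i)) ∧ (∃ i, ∀ j, f i j = id) ∧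
    ∀ q ∈ Qbar, (fun i j => f i j (q j)) ∈ S

/-- `Qbar` is `(n, ε)`-good: every `S ⊆ Q̄ⁿ` with `μ(S) = |S|/|Q̄|ⁿ ≥ ε` admits a
good vector of homomorphisms. -/
def IsGood {r : ℕ} {Q : Fin r → Type} [∀ j, Fintype (Q j)] [∀ j, DecidableEq (Q j)]
    (Qbar : Finset (∀ j, Q j)) (n : ℕ) (ε : ℝ) : Prop :=
  ∀ S : Finset (Fin n → ∀ j, Q j), S ⊆ Fintype.piFinset (fun _ => Qbar) →
    ε ≤ (S.card : ℝ) / (Qbar.card : ℝ) ^ n →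
    ∃ f : Fin n → ∀ j, Q j → Q j, GoodFor Qbar S f

/-- `ω^good_Q̄(n) = inf {ε : Q̄ is (n,ε)-good}`. -/
noncomputable def omegaGood {r : ℕ} {Q : Fin r → Type} [∀ j, Fintype (Q j)]
    [∀ j, DecidableEq (Q j)] (Qbar : Finset (∀ j, Q j)) (n : ℕ) : ℝ :=
  sInf { ε : ℝ | IsGood Qbar n ε }

/-!
If a strategy for `Gⁿ` wins on a set `S` of density at least `ε` and `f` is good for `S`, then
feeding each prover the questions `(f_1(x), …, f_n(x))` and keeping its answer in a coordinate `i`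
with `f_i = Id` is a strategy for `G` that wins on every question. So for a non-trivial game every
strategy for `Gⁿ` wins with probability below any `ε` for which `Q̄` is `(n, ε)`-good.
-/

section

variable {r : ℕ} {Q A : Fin r → Type}

lemma gameValue_eq_one_of_forall_win {Qbar : Finset (∀ j, Q j)}
    (hne : Qbar.Nonempty) {V : (∀ j, Q j) → (∀ j, A j) → Bool} (S : ∀ j, Q j → A j)
    (hwin : ∀ q ∈ Qbar, V q (fun j => S j (q j)) = true) :
    gameValue Qbar V = 1 := by
  have hcard : (0 : ℝ) < Qbar.card := by exact_mod_cast hne.card_pos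
  have hle : ∀ x ∈ {x : ℝ | ∃ T : ∀ j, Q j → A j,
      x = ((Qbar.filter fun q => V q (fun j => T j (q j)) = true).card : ℝ) / Qbar.card},
      x ≤ 1 := by
    rintro x ⟨T, rfl⟩
    rw [div_le_one hcard]
    exact_mod_cast Finset.card_filter_le _ _
  refine le_antisymm (Real.sSup_le hle zero_le_one) (le_csSup ⟨1, hle⟩ ⟨S, ?_⟩)
  rw [Finset.filter_true_of_mem hwin, div_self hcard.ne']

def repWinning (n : ℕ) (Qbar : Finset (∀ j, Q j))
    (V : (∀ j, Q j) → (∀ j, A j) → Bool) (S : ∀ j, (Fin n → Q j) → (Fin n → A j)) :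
    Finset (Fin n → ∀ j, Q j) :=
  (Fintype.piFinset fun _ : Fin n => Qbar).filter fun q =>
    ∀ i, V (q i) (fun j => S j (fun i' => q i' j) i) = true

lemma gameValue_eq_one_of_goodFor {Qbar : Finset (∀ j, Q j)}
    (hne : Qbar.Nonempty) {n : ℕ} {V : (∀ j, Q j) → (∀ j, A j) → Bool}
    {S : ∀ j, (Fin n → Q j) → (Fin n → A j)} {f : Fin n → ∀ j, Q j → Q j}
    (hf : GoodFor Qbar (repWinning n Qbar V S) f) :
    gameValue Qbar V = 1 := by
  obtain ⟨-, ⟨i₀, hid⟩, hmem⟩ := hf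
  refine gameValue_eq_one_of_forall_win hne (fun j x => S j (fun i => f i j x) i₀) fun q hq => ?_
  have hfix : (fun j => f i₀ j (q j)) = q := funext fun j => by rw [hid j]; rfl
  simpa [hfix] using (Finset.mem_filter.mp (hmem q hq)).2 i₀

variable [∀ j, Fintype (Q j)] [∀ j, DecidableEq (Q j)] {Qbar : Finset (∀ j, Q j)} {n : ℕ} {ε : ℝ}

lemma isGood_of_one_lt (hε : 1 < ε) : IsGood Qbar n ε := by
  intro S hS hdense
  have hcard : (S.card : ℝ) ≤ (Qbar.card : ℝ) ^ n := by
    exact_mod_cast (Finset.card_le_card hS).trans_eq (Fintype.card_piFinset_const Qbar n)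
  exact absurd (hdense.trans (div_le_one_of_le₀ hcard (by positivity))) hε.not_ge

lemma IsGood.nonneg (hne : Qbar.Nonempty) (hg : IsGood Qbar n ε) : 0 ≤ ε := by
  by_contra! hneg
  obtain ⟨q, hq⟩ := hne
  obtain ⟨f, -, -, hmem⟩ := hg ∅ (Finset.empty_subset _) (by simpa using hneg.le)
  exact Finset.notMem_empty _ (hmem q hq)

lemma repValue_le_of_isGood (hne : Qbar.Nonempty) (hg : IsGood Qbar n ε)
    {V : (∀ j, Q j) → (∀ j, A j) → Bool} (hnt : gameValue Qbar V ≠ 1) :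
    repValue n Qbar V ≤ ε := by
  refine Real.sSup_le ?_ (hg.nonneg hne)
  rintro x ⟨S, rfl⟩
  by_contra! hdense
  have hdense' : ε ≤ ((repWinning n Qbar V S).card : ℝ) / (Qbar.card : ℝ) ^ n := by
    rw [← Nat.cast_pow, ← Fintype.card_piFinset_const]
    exact hdense.le
  obtain ⟨f, hf⟩ := hg _ (Finset.filter_subset _ _) hdense'
  exact hnt (gameValue_eq_one_of_goodFor hne hf)

end

theorem statement9_general (r : ℕ) (Q : Fin r → Type) [∀ j, Fintype (Q j)]
    [∀ j, DecidableEq (Q j)] (Qbar : Finset (∀ j, Q j)) (hne : Qbar.Nonempty)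
    (n : ℕ) :
    omegaQ Qbar n ≤ omegaGood Qbar n := by
  refine le_csInf ⟨2, isGood_of_one_lt one_lt_two⟩ fun ε hε => ?_
  refine Real.sSup_le ?_ (hε.nonneg hne)
  rintro x ⟨A, -, -, V, hnt, rfl⟩
  exact repValue_le_of_isGood hne hε hnt

/-- The forbidden-subgraph (good-sets) method: for every `r`-prover question set
`Qbar` and every `n ≥ 1`, `ω_Q̄(n) ≤ ω^good_Q̄(n)`. -/
theorem statement9 (r : ℕ) (Q : Fin r → Type) [∀ j, Fintype (Q j)]
    [∀ j, DecidableEq (Q j)] (Qbar : Finset (∀ j, Q j)) (hne : Qbar.Nonempty)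
    (hcov : ∀ (j : Fin r) (x : Q j), ∃ q ∈ Qbar, q j = x)
    (n : ℕ) (hn : 1 ≤ n) :
    omegaQ Qbar n ≤ omegaGood Qbar n :=
  statement9_general r Q Qbar hne n
end

section
/- Let P̄ be an r-partite r-regular hypergraph that is constructible by conditioning using k doublings (and an arbitrary number of collapses), and let Q̄ be another r-partite r-regular hypergraph with M := |Q̄| hyperedges. Then there exists a probability distribution ℋ over Hom(P̄,Q̄) such that: (1) with C = 2^k, when f = (f_1,…,f_n) is sampled with each f_i i.i.d. from ℋ, for every S ⊆ Q̄^n one has Pr[∀ p̄ ∈ P̄ : (f_1(p̄),…,f_n(p̄)) ∈ S] ≥ μ(S)^C, where μ(S) = |S|/M^n; and (2) min_{f ∈ Hom(P̄,Q̄)} ℋ(f) ≥ 1/M^C with C = 2^k. -/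
/-- The class of `r`-regular `r`-partite hypergraphs (presented by per-part vertex
types `W j`, vertex sets `verts j ⊆ W j`, and a hyperedge set `edges`) that are
constructible by conditioning, together with the number of doubling steps used.

* `single`: a single hyperedge is constructible (0 doublings);
* `double`: doubling a set `old j ⊆ verts j` of old vertices (the remaining vertices
  being fixed) adds a fresh copy of every old vertex, and for every hyperedge that is
  not entirely fixed, a new hyperedge in which every old vertex is replaced by its copy;
* `collapse`: if some homomorphism of the hypergraph into the section hypergraph
  induced by `P j ⊆ verts j` is the identity on all vertices of the section, then the
  section hypergraph is constructible;
* `iso`: the class is closed under isomorphic re-presentation of a hypergraph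
  (injectively re-embedding the vertex parts). -/
inductive ConstructibleHG (r : ℕ) :
    ∀ (W : Fin r → Type), (∀ j, Set (W j)) → Set (∀ j, W j) → ℕ → Prop where
  | single (W : Fin r → Type) (e : ∀ j, W j) :
      ConstructibleHG r W (fun j => {e j}) {e} 0
  | double (W : Fin r → Type) (verts : ∀ j, Set (W j)) (edges : Set (∀ j, W j))
      (old : ∀ j, Set (W j)) (k : ℕ)
      (hold : ∀ j, old j ⊆ verts j)
      (h : ConstructibleHG r W verts edges k) :
      ConstructibleHG r (fun j => W j ⊕ W j)
        (fun j => (Sum.inl '' verts j) ∪ (Sum.inr '' old j))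
        ({ e' | ∃ e ∈ edges, ∀ j, e' j = Sum.inl (e j) } ∪
         { e' | ∃ e ∈ edges, (∃ j, e j ∈ old j) ∧
            ∀ j, (e j ∈ old j ∧ e' j = Sum.inr (e j)) ∨
                 (e j ∉ old j ∧ e' j = Sum.inl (e j)) })
        (k + 1)
  | collapse (W : Fin r → Type) (verts P : ∀ j, Set (W j)) (edges : Set (∀ j, W j))
      (k : ℕ) (f : ∀ j, W j → W j)
      (hP : ∀ j, P j ⊆ verts j)
      (hhom : ∀ e ∈ edges, (fun j => f j (e j)) ∈ { e ∈ edges | ∀ j, e j ∈ P j })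
      (hfix : ∀ j, ∀ v ∈ P j, f j v = v)
      (h : ConstructibleHG r W verts edges k) :
      ConstructibleHG r W P { e ∈ edges | ∀ j, e j ∈ P j } k
  | iso (W W' : Fin r → Type) (verts : ∀ j, Set (W j)) (edges : Set (∀ j, W j))
      (k : ℕ) (φ : ∀ j, W j → W' j)
      (hinj : ∀ j, Set.InjOn (φ j) (verts j))
      (h : ConstructibleHG r W verts edges k) :
      ConstructibleHG r W' (fun j => φ j '' verts j)
        { e' | ∃ e ∈ edges, ∀ j, e' j = φ j (e j) } k

/-- The finite set `Hom(P̄, Q̄)` of homomorphisms from the hypergraph `Pbar` to the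
hypergraph `Qbar` (tuples of maps, one per part, sending hyperedges to hyperedges). -/
def homSet {r : ℕ} {QP QQ : Fin r → Type}
    [∀ j, Fintype (QP j)] [∀ j, DecidableEq (QP j)]
    [∀ j, Fintype (QQ j)] [∀ j, DecidableEq (QQ j)]
    (Pbar : Finset (∀ j, QP j)) (Qbar : Finset (∀ j, QQ j)) :
    Finset (∀ j, QP j → QQ j) :=
  Finset.univ.filter fun f => ∀ p ∈ Pbar, (fun j => f j (p j)) ∈ Qbar

/-!
Carry along, through the construction, a finite weighted family of maps whose pushforward is `ℋ`,
together with both bounds for the exponent `2 ^ k`. A single hyperedge takes the uniform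
distribution on `Q̄`. A collapse keeps the family: the section has fewer hyperedges, and a
homomorphism of the section composed with the collapsing map is a homomorphism of the whole.
Isomorphic copies transport the family. Doubling takes two samples conditioned to agree on the
fixed vertices; Cauchy–Schwarz over the values on the fixed vertices shows that both samples land
in an event with probability at least the square of the probability for one, which squares
`μ(S) ^ C`. This applies to `n` i.i.d. copies because conditioning commutes with products.
-/

open Finset

lemma Finset.sum_filter_le_sum_filter_of_ne_zero {ι : Type*} {s : Finset ι} {f : ι → ℝ}
    {p q : ι → Prop} [DecidablePred p] [DecidablePred q] (hf : ∀ i ∈ s, 0 ≤ f i)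
    (hpq : ∀ i ∈ s, p i → f i ≠ 0 → q i) :
    ∑ i ∈ s with p i, f i ≤ ∑ i ∈ s with q i, f i := by
  rw [← sum_filter_ne_zero]
  refine sum_le_sum_of_subset_of_nonneg (fun i hi => ?_) fun i hi _ => hf i (mem_filter.1 hi).1
  simp only [mem_filter] at hi ⊢
  exact ⟨hi.1.1, hpq i hi.1.1 hi.1.2 hi.2⟩

lemma Set.InjOn.extend_domRestrict_apply {α β γ : Type*} {f : α → β} {s : Set α}
    (hf : Set.InjOn f s) (g : α → γ) (d : β → γ) {a : α} (ha : a ∈ s) :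
    Function.extend (s.domRestrict f) (s.domRestrict g) d (f a) = g a :=
  hf.injective.extend_apply _ _ ⟨a, ha⟩

section CondCoupling

variable {Ω β : Type*} [Fintype Ω] [DecidableEq β] (h : Ω → ℝ) (lab : Ω → β)

def fiberWeight (b : β) : ℝ := ∑ ω with lab ω = b, h ω

/-- Two independent samples of `h` conditioned on having the same label. -/
noncomputable def condCoupling (p : Ω × Ω) : ℝ :=
  if lab p.1 = lab p.2 then h p.1 * h p.2 / fiberWeight h lab (lab p.1) else 0

variable {h}

lemma fiberWeight_nonneg (hh : ∀ ω, 0 ≤ h ω) (b : β) : 0 ≤ fiberWeight h lab b :=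
  sum_nonneg fun ω _ => hh ω

lemma le_fiberWeight (hh : ∀ ω, 0 ≤ h ω) (ω : Ω) : h ω ≤ fiberWeight h lab (lab ω) :=
  single_le_sum (fun ω _ => hh ω) (mem_filter.2 ⟨mem_univ ω, rfl⟩)

lemma fiberWeight_le_sum (hh : ∀ ω, 0 ≤ h ω) (b : β) : fiberWeight h lab b ≤ ∑ ω, h ω :=
  sum_le_sum_of_subset_of_nonneg (filter_subset _ _) fun ω _ _ => hh ω

lemma eq_zero_of_fiberWeight_eq_zero (hh : ∀ ω, 0 ≤ h ω) {ω : Ω}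
    (h0 : fiberWeight h lab (lab ω) = 0) : h ω = 0 :=
  le_antisymm (h0 ▸ le_fiberWeight lab hh ω) (hh ω)

lemma fiberWeight_pi {ι : Type*} [Fintype ι] [DecidableEq ι] (b : ι → β) :
    fiberWeight (fun F : ι → Ω => ∏ i, h (F i)) (fun F i => lab (F i)) b =
      ∏ i, fiberWeight h lab (b i) := by
  simp only [fiberWeight, prod_univ_sum]
  congr 1
  ext F
  simp [funext_iff, Fintype.mem_piFinset]

lemma sum_fiberWeight (A : Finset β) : ∑ b ∈ A, fiberWeight h lab b = ∑ ω with lab ω ∈ A, h ω :=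
  sum_fiberwise_eq_sum_filter _ _ _ _

lemma sum_prod_fiberWeight {ι : Type*} [Fintype ι] [DecidableEq ι] (A : Finset (ι → β)) :
    ∑ b ∈ A, ∏ i, fiberWeight h lab (b i) =
      ∑ F : ι → Ω with (fun i => lab (F i)) ∈ A, ∏ i, h (F i) := by
  simp_rw [← fiberWeight_pi]
  exact sum_fiberWeight _ A

lemma condCoupling_nonneg (hh : ∀ ω, 0 ≤ h ω) (p : Ω × Ω) : 0 ≤ condCoupling h lab p := by
  unfold condCoupling
  split_ifs
  · exact div_nonneg (mul_nonneg (hh _) (hh _)) (fiberWeight_nonneg lab hh _)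
  · exact le_rfl

lemma label_eq_of_condCoupling_ne_zero {p : Ω × Ω} (hp : condCoupling h lab p ≠ 0) :
    lab p.1 = lab p.2 := by
  by_contra hne
  exact hp (if_neg hne)

lemma ne_zero_of_condCoupling_ne_zero {p : Ω × Ω} (hp : condCoupling h lab p ≠ 0) :
    h p.1 ≠ 0 ∧ h p.2 ≠ 0 := by
  unfold condCoupling at hp
  split_ifs at hp
  · exact ⟨fun h0 => hp (by simp [h0]), fun h0 => hp (by simp [h0])⟩
  · exact absurd rfl hp

lemma mul_le_condCoupling (hh : ∀ ω, 0 ≤ h ω) (hsum : ∑ ω, h ω = 1) {p : Ω × Ω}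
    (hp : lab p.1 = lab p.2) : h p.1 * h p.2 ≤ condCoupling h lab p := by
  rw [condCoupling, if_pos hp]
  rcases (fiberWeight_nonneg lab hh (lab p.1)).eq_or_lt with h0 | hpos
  · simp [eq_zero_of_fiberWeight_eq_zero lab hh h0.symm]
  · exact le_div_self (mul_nonneg (hh _) (hh _)) hpos (hsum ▸ fiberWeight_le_sum lab hh _)

lemma sum_condCoupling_left (ω : Ω) (s : Finset Ω) :
    ∑ ω' ∈ s, condCoupling h lab (ω, ω') =
      h ω * (∑ ω' ∈ s with lab ω' = lab ω, h ω') / fiberWeight h lab (lab ω) := by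
  rw [sum_filter, mul_sum, sum_div]
  refine sum_congr rfl fun ω' _ => ?_
  simp only [condCoupling, eq_comm (a := lab ω')]
  split_ifs <;> simp

lemma sum_condCoupling (hh : ∀ ω, 0 ≤ h ω) : ∑ p, condCoupling h lab p = ∑ ω, h ω := by
  rw [Fintype.sum_prod_type]
  refine sum_congr rfl fun ω _ => ?_
  rw [sum_condCoupling_left]
  exact mul_div_cancel_of_imp (eq_zero_of_fiberWeight_eq_zero lab hh)

lemma sq_sum_filter_le_mul_sum_condCoupling (hh : ∀ ω, 0 ≤ h ω) (ev : Ω → Prop)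
    [DecidablePred ev] :
    (∑ ω with ev ω, h ω) ^ 2 ≤ (∑ ω, h ω) * ∑ p with ev p.1 ∧ ev p.2, condCoupling h lab p := by
  set t := univ.image lab
  set A : β → ℝ := fun b => ∑ ω ∈ univ.filter ev with lab ω = b, h ω
  have hmaps : ∀ ω ∈ (univ : Finset Ω), lab ω ∈ t := fun ω _ => mem_image_of_mem lab (mem_univ ω)
  have hA : ∑ ω with ev ω, h ω = ∑ b ∈ t, A b :=
    (sum_fiberwise_of_maps_to (fun ω hω => hmaps ω (filter_subset _ _ hω)) h).symm
  have hW : ∑ ω, h ω = ∑ b ∈ t, fiberWeight h lab b := (sum_fiberwise_of_maps_to hmaps h).symm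
  have hC : ∑ p with ev p.1 ∧ ev p.2, condCoupling h lab p =
      ∑ b ∈ t, A b ^ 2 / fiberWeight h lab b := by
    rw [← univ_product_univ, filter_product, sum_product]
    simp_rw [sum_condCoupling_left]
    rw [← sum_fiberwise_of_maps_to (fun ω hω => hmaps ω (filter_subset _ _ hω))]
    refine sum_congr rfl fun b _ => ?_
    rw [sum_congr rfl fun ω hω => by rw [(mem_filter.1 hω).2], ← sum_div, ← sum_mul, sq]
  rw [hA, hW, hC]
  refine sum_sq_le_sum_mul_sum_of_sq_le_mul t (fun b _ => fiberWeight_nonneg lab hh b)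
    (fun b _ => div_nonneg (sq_nonneg _) (fiberWeight_nonneg lab hh b)) fun b _ => ?_
  rcases eq_or_ne (fiberWeight h lab b) 0 with h0 | hne
  · have hAW : A b ≤ fiberWeight h lab b :=
      sum_le_sum_of_subset_of_nonneg (filter_subset_filter _ (filter_subset _ _))
        fun ω _ _ => hh ω
    have hA0 : A b = 0 := le_antisymm (h0 ▸ hAW) (sum_nonneg fun ω _ => hh ω)
    simp [hA0]
  · rw [mul_div_cancel₀ _ hne]

lemma condCoupling_pi {ι : Type*} [Fintype ι] [DecidableEq ι] (p : (ι → Ω) × (ι → Ω)) :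
    condCoupling (fun F : ι → Ω => ∏ i, h (F i)) (fun F i => lab (F i)) p =
      ∏ i, condCoupling h lab (p.1 i, p.2 i) := by
  by_cases hp : ∀ i, lab (p.1 i) = lab (p.2 i)
  · simp only [condCoupling, if_pos (funext hp), if_pos (hp _), fiberWeight_pi,
      prod_div_distrib, prod_mul_distrib]
  · obtain ⟨i, hi⟩ := not_forall.1 hp
    rw [condCoupling, if_neg fun heq => hi (congrFun heq i)]
    exact (prod_eq_zero (mem_univ i) (if_neg hi)).symm

end CondCoupling

section Hypergraph

variable {r : ℕ} {W : Fin r → Type}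

lemma ConstructibleHG.mem_verts {verts : ∀ j, Set (W j)} {edges : Set (∀ j, W j)} {k : ℕ}
    (hc : ConstructibleHG r W verts edges k) : ∀ e ∈ edges, ∀ j, e j ∈ verts j := by
  induction hc with
  | single W e₀ => rintro e rfl j; rfl
  | double W verts edges old k hold h ih =>
    rintro e' (⟨e, he, hco⟩ | ⟨e, he, -, hco⟩) j
    · exact hco j ▸ Or.inl ⟨e j, ih e he j, rfl⟩
    · rcases hco j with ⟨hold, hj⟩ | ⟨-, hj⟩
      · exact hj ▸ Or.inr ⟨e j, hold, rfl⟩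
      · exact hj ▸ Or.inl ⟨e j, ih e he j, rfl⟩
  | collapse W verts P edges k f hP hhom hfix h ih => exact fun e he j => he.2 j
  | iso W W' verts edges k φ hinj h ih =>
    rintro e' ⟨e, he, hco⟩ j
    exact hco j ▸ ⟨e j, ih e he j, rfl⟩

def doubleEdges (edges : Set (∀ j, W j)) (old : ∀ j, Set (W j)) : Set (∀ j, W j ⊕ W j) :=
  { e' | ∃ e ∈ edges, ∀ j, e' j = Sum.inl (e j) } ∪
    { e' | ∃ e ∈ edges, (∃ j, e j ∈ old j) ∧
      ∀ j, (e j ∈ old j ∧ e' j = Sum.inr (e j)) ∨ (e j ∉ old j ∧ e' j = Sum.inl (e j)) }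

variable {verts old : ∀ j, Set (W j)} {edges : Set (∀ j, W j)}

lemma inl_mem_doubleEdges {e : ∀ j, W j} (he : e ∈ edges) :
    (fun j => Sum.inl (e j)) ∈ doubleEdges edges old :=
  Or.inl ⟨e, he, fun _ => rfl⟩

open Classical in
lemma mixed_mem_doubleEdges {e : ∀ j, W j} (he : e ∈ edges) :
    (fun j => if e j ∈ old j then Sum.inr (e j) else Sum.inl (e j)) ∈ doubleEdges edges old := by
  by_cases hmoved : ∃ j, e j ∈ old j
  · refine Or.inr ⟨e, he, hmoved, fun j => ?_⟩
    by_cases hj : e j ∈ old j <;> simp [hj]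
  · convert inl_mem_doubleEdges (old := old) he using 2 with j
    simp [not_exists.1 hmoved j]

lemma exists_eq_of_mem_doubleEdges (hedges : ∀ e ∈ edges, ∀ j, e j ∈ verts j)
    {e' : ∀ j, W j ⊕ W j} (he' : e' ∈ doubleEdges edges old) {R : Fin r → Type*} :
    ∃ e ∈ edges,
      (∀ f f' : ∀ j, W j → R j, (fun j => Sum.elim (f j) (f' j) (e' j)) = fun j => f j (e j)) ∨
      (∀ f f' : ∀ j, W j → R j, (∀ j, Set.EqOn (f j) (f' j) (verts j \ old j)) →
        (fun j => Sum.elim (f j) (f' j) (e' j)) = fun j => f' j (e j)) := by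
  rcases he' with ⟨e, he, hco⟩ | ⟨e, he, -, hco⟩
  · exact ⟨e, he, Or.inl fun f f' => funext fun j => by rw [hco j]; rfl⟩
  · refine ⟨e, he, Or.inr fun f f' hff => funext fun j => ?_⟩
    rcases hco j with ⟨-, hj⟩ | ⟨hfixed, hj⟩
    · rw [hj]; rfl
    · rw [hj]; exact hff j ⟨hedges e he j, hfixed⟩

end Hypergraph

open Classical in
/-- A finite family of weighted maps `W → Q̄` witnessing the theorem for the hypergraph
`(verts, edges)` with `2 ^ k` in the exponents. The distribution `ℋ` is the pushforward of
`weight` along `toFun`; members of weight zero need not be homomorphisms. -/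
structure HomSampler {r : ℕ} {QQ : Fin r → Type} (Qbar : Finset (∀ j, QQ j))
    (W : Fin r → Type) (verts : ∀ j, Set (W j)) (edges : Set (∀ j, W j)) (k : ℕ) where
  Ω : Type
  [fintype : Fintype Ω]
  weight : Ω → ℝ
  toFun : Ω → ∀ j, W j → QQ j
  weight_nonneg : ∀ ω, 0 ≤ weight ω
  sum_weight : ∑ ω, weight ω = 1
  mem_of_weight_ne_zero : ∀ ω, weight ω ≠ 0 → ∀ e ∈ edges, (fun j => toFun ω j (e j)) ∈ Qbar
  density_pow_le : ∀ (n : ℕ) (S : Finset (Fin n → ∀ j, QQ j)),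
    S ⊆ Fintype.piFinset (fun _ => Qbar) →
    ((S.card : ℝ) / (Qbar.card : ℝ) ^ n) ^ 2 ^ k ≤
      ∑ F : Fin n → Ω with ∀ e ∈ edges, (fun i j => toFun (F i) j (e j)) ∈ S, ∏ i, weight (F i)
  exists_eqOn_le_weight : ∀ g : ∀ j, W j → QQ j, (∀ e ∈ edges, (fun j => g j (e j)) ∈ Qbar) →
    ∃ ω, 1 / (Qbar.card : ℝ) ^ 2 ^ k ≤ weight ω ∧ ∀ j, Set.EqOn (toFun ω j) (g j) (verts j)

attribute [instance] HomSampler.fintype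

namespace HomSampler

variable {r k : ℕ} {QQ : Fin r → Type} {Qbar : Finset (∀ j, QQ j)} {W : Fin r → Type}
  {verts : ∀ j, Set (W j)} {edges : Set (∀ j, W j)}

section Single

variable [∀ j, Fintype (QQ j)] [∀ j, DecidableEq (QQ j)]

noncomputable def single (hQ : Qbar.Nonempty) (e : ∀ j, W j) :
    HomSampler Qbar W (fun j => {e j}) {e} 0 where
  Ω := ∀ j, QQ j
  weight q := if q ∈ Qbar then 1 / Qbar.card else 0
  toFun q j _ := q j
  weight_nonneg q := by positivity
  sum_weight := by
    rw [← sum_filter, filter_mem_eq_inter, univ_inter, sum_const, nsmul_eq_mul,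
      mul_one_div_cancel (Nat.cast_ne_zero.2 hQ.card_pos.ne')]
  mem_of_weight_ne_zero q hq _ _ := by
    by_contra hne
    exact hq (if_neg hne)
  density_pow_le n S hS := by
    classical
    have hprod : ∀ F ∈ S, ∏ i, (if F i ∈ Qbar then 1 / (Qbar.card : ℝ) else 0) =
        1 / (Qbar.card : ℝ) ^ n := fun F hF => by
      simp [Fintype.mem_piFinset.1 (hS hF)]
    have hfilter : (univ.filter fun F : Fin n → ∀ j, QQ j =>
        ∀ e' ∈ ({e} : Set (∀ j, W j)), (fun i j => F i j) ∈ S) = S := by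
      ext F
      simp
    rw [hfilter, sum_congr rfl hprod, sum_const, nsmul_eq_mul, pow_zero, pow_one, mul_one_div]
  exists_eqOn_le_weight g hg := by
    refine ⟨fun j => g j (e j), ?_, fun j v hv => by rw [Set.mem_singleton_iff.1 hv]⟩
    simp [hg e rfl]

end Single

variable (D : HomSampler Qbar W verts edges k)

lemma prod_weight_nonneg {n : ℕ} (F : Fin n → D.Ω) : 0 ≤ ∏ i, D.weight (F i) :=
  prod_nonneg fun i _ => D.weight_nonneg (F i)

lemma sum_prod_weight (n : ℕ) : ∑ F : Fin n → D.Ω, ∏ i, D.weight (F i) = 1 := by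
  rw [← Fintype.prod_sum fun _ => D.weight]
  simp [D.sum_weight]

open Classical in
def collapse (P : ∀ j, Set (W j)) (σ : ∀ j, W j → W j) (hP : ∀ j, P j ⊆ verts j)
    (hσ : ∀ e ∈ edges, (fun j => σ j (e j)) ∈ { e ∈ edges | ∀ j, e j ∈ P j })
    (hfix : ∀ j, ∀ v ∈ P j, σ j v = v) :
    HomSampler Qbar W P { e ∈ edges | ∀ j, e j ∈ P j } k where
  Ω := D.Ω
  weight := D.weight
  toFun := D.toFun
  weight_nonneg := D.weight_nonneg
  sum_weight := D.sum_weight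
  mem_of_weight_ne_zero ω hω e he := D.mem_of_weight_ne_zero ω hω e he.1
  density_pow_le n S hS := (D.density_pow_le n S hS).trans <|
    sum_le_sum_of_subset_of_nonneg (monotone_filter_right _ fun _ _ hF e he => hF e he.1)
      fun F _ _ => D.prod_weight_nonneg F
  exists_eqOn_le_weight g hg := by
    obtain ⟨ω, hω, hagree⟩ :=
      D.exists_eqOn_le_weight (fun j v => g j (σ j v)) fun e he => hg _ (hσ e he)
    exact ⟨ω, hω, fun j v hv => (hagree j (hP j hv)).trans (congrArg (g j) (hfix j v hv))⟩

section Iso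

variable {W' : Fin r → Type} (φ : ∀ j, W j → W' j) (q : ∀ j, QQ j)

noncomputable def isoToFun (ω : D.Ω) : ∀ j, W' j → QQ j :=
  fun j => Function.extend ((verts j).domRestrict (φ j)) ((verts j).domRestrict (D.toFun ω j))
    fun _ => q j

variable {φ}

lemma isoToFun_apply (hφ : ∀ j, Set.InjOn (φ j) (verts j)) (ω : D.Ω) {j : Fin r} {v : W j}
    (hv : v ∈ verts j) :
    D.isoToFun φ q ω j (φ j v) = D.toFun ω j v :=
  (hφ j).extend_domRestrict_apply _ _ hv

lemma isoToFun_comp_of_mem (hφ : ∀ j, Set.InjOn (φ j) (verts j))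
    (hedges : ∀ e ∈ edges, ∀ j, e j ∈ verts j) (ω : D.Ω) {e : ∀ j, W j} (he : e ∈ edges)
    {e' : ∀ j, W' j} (hco : ∀ j, e' j = φ j (e j)) :
    (fun j => D.isoToFun φ q ω j (e' j)) = fun j => D.toFun ω j (e j) :=
  funext fun j => by rw [hco j, D.isoToFun_apply q hφ ω (hedges e he j)]

open Classical in
noncomputable def iso (hφ : ∀ j, Set.InjOn (φ j) (verts j))
    (hedges : ∀ e ∈ edges, ∀ j, e j ∈ verts j) :
    HomSampler Qbar W' (fun j => φ j '' verts j) { e' | ∃ e ∈ edges, ∀ j, e' j = φ j (e j) } k where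
  Ω := D.Ω
  weight := D.weight
  toFun := D.isoToFun φ q
  weight_nonneg := D.weight_nonneg
  sum_weight := D.sum_weight
  mem_of_weight_ne_zero ω hω := by
    rintro e' ⟨e, he, hco⟩
    rw [D.isoToFun_comp_of_mem q hφ hedges ω he hco]
    exact D.mem_of_weight_ne_zero ω hω e he
  density_pow_le n S hS := by
    refine (D.density_pow_le n S hS).trans_eq <|
      sum_congr (filter_congr fun F _ => ?_) fun _ _ => rfl
    have hcomp : ∀ e ∈ edges, ∀ e' : ∀ j, W' j, (∀ j, e' j = φ j (e j)) →
        (fun i j => D.isoToFun φ q (F i) j (e' j)) = fun i j => D.toFun (F i) j (e j) :=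
      fun e he e' hco => funext fun i => D.isoToFun_comp_of_mem q hφ hedges (F i) he hco
    constructor
    · rintro hF e' ⟨e, he, hco⟩
      rw [hcomp e he e' hco]
      exact hF e he
    · intro hF e he
      rw [← hcomp e he _ fun _ => rfl]
      exact hF _ ⟨e, he, fun _ => rfl⟩
  exists_eqOn_le_weight g hg := by
    obtain ⟨ω, hω, hagree⟩ :=
      D.exists_eqOn_le_weight (fun j v => g j (φ j v)) fun e he => hg _ ⟨e, he, fun _ => rfl⟩
    refine ⟨ω, hω, ?_⟩
    rintro j _ ⟨v, hv, rfl⟩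
    rw [D.isoToFun_apply q hφ ω hv]
    exact hagree j hv

end Iso

section Double

variable (old : ∀ j, Set (W j))

def fixedLabel (ω : D.Ω) : ∀ j, ↥(verts j \ old j) → QQ j :=
  fun j => (verts j \ old j).domRestrict (D.toFun ω j)

variable {D old}

lemma fixedLabel_eq_fixedLabel_iff {ω ω' : D.Ω} :
    D.fixedLabel old ω = D.fixedLabel old ω' ↔
      ∀ j, Set.EqOn (D.toFun ω j) (D.toFun ω' j) (verts j \ old j) :=
  ⟨fun h j => Set.domRestrict_eq_domRestrict_iff.1 (congrFun h j),
    fun h => funext fun j => Set.domRestrict_eq_domRestrict_iff.2 (h j)⟩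

variable (D)

open Classical in
lemma density_pow_le_double (hedges : ∀ e ∈ edges, ∀ j, e j ∈ verts j) (n : ℕ)
    (S : Finset (Fin n → ∀ j, QQ j)) (hS : S ⊆ Fintype.piFinset fun _ => Qbar) :
    ((S.card : ℝ) / (Qbar.card : ℝ) ^ n) ^ 2 ^ (k + 1) ≤
      ∑ G : Fin n → D.Ω × D.Ω with ∀ e' ∈ doubleEdges edges old,
          (fun i j => Sum.elim (D.toFun (G i).1 j) (D.toFun (G i).2 j) (e' j)) ∈ S,
        ∏ i, condCoupling D.weight (D.fixedLabel old) (G i) := by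
  set ev : (Fin n → D.Ω) → Prop := fun F => ∀ e ∈ edges, (fun i j => D.toFun (F i) j (e j)) ∈ S
  set ev₂ : (Fin n → D.Ω × D.Ω) → Prop := fun G => ∀ e' ∈ doubleEdges edges old,
    (fun i j => Sum.elim (D.toFun (G i).1 j) (D.toFun (G i).2 j) (e' j)) ∈ S
  set labn : (Fin n → D.Ω) → Fin n → _ := fun F i => D.fixedLabel old (F i)
  have hprod_nonneg : ∀ F : Fin n → D.Ω, 0 ≤ ∏ i, D.weight (F i) := D.prod_weight_nonneg
  have hev₂ : ∀ F F' : Fin n → D.Ω, ev F → ev F' → labn F = labn F' → ev₂ fun i => (F i, F' i) := by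
    intro F F' hF hF' hlab e' he'
    obtain ⟨e, he, hinl | hmixed⟩ := exists_eq_of_mem_doubleEdges hedges he' (R := QQ)
    · rw [funext fun i => hinl (D.toFun (F i)) (D.toFun (F' i))]
      exact hF e he
    · rw [funext fun i => hmixed (D.toFun (F i)) (D.toFun (F' i))
        (fixedLabel_eq_fixedLabel_iff.1 (congrFun hlab i))]
      exact hF' e he
  calc ((S.card : ℝ) / (Qbar.card : ℝ) ^ n) ^ 2 ^ (k + 1)
      = (((S.card : ℝ) / (Qbar.card : ℝ) ^ n) ^ 2 ^ k) ^ 2 := by ring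
    _ ≤ (∑ F with ev F, ∏ i, D.weight (F i)) ^ 2 :=
      pow_le_pow_left₀ (by positivity) (D.density_pow_le n S hS) 2
    _ ≤ (∑ F : Fin n → D.Ω, ∏ i, D.weight (F i)) *
          ∑ p with ev p.1 ∧ ev p.2, condCoupling (fun F => ∏ i, D.weight (F i)) labn p :=
      sq_sum_filter_le_mul_sum_condCoupling labn hprod_nonneg ev
    _ ≤ ∑ p with ev₂ (fun i => (p.1 i, p.2 i)),
          condCoupling (fun F => ∏ i, D.weight (F i)) labn p := by
      rw [D.sum_prod_weight, one_mul]
      exact sum_filter_le_sum_filter_of_ne_zero (fun p _ => condCoupling_nonneg labn hprod_nonneg p)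
        fun p _ hp hne => hev₂ p.1 p.2 hp.1 hp.2 (label_eq_of_condCoupling_ne_zero labn hne)
    _ = ∑ p with ev₂ (fun i => (p.1 i, p.2 i)),
          ∏ i, condCoupling D.weight (D.fixedLabel old) (p.1 i, p.2 i) :=
      sum_congr rfl fun p _ => condCoupling_pi _ p
    _ = _ := by
      rw [sum_filter, sum_filter]
      exact Fintype.sum_equiv (Equiv.arrowProdEquivProdArrow _ _ _).symm _ _ fun p => rfl

open Classical in
lemma exists_eqOn_le_weight_double (hold : ∀ j, old j ⊆ verts j)
    {g : ∀ j, W j ⊕ W j → QQ j} (hg : ∀ e' ∈ doubleEdges edges old, (fun j => g j (e' j)) ∈ Qbar) :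
    ∃ p : D.Ω × D.Ω,
      1 / (Qbar.card : ℝ) ^ 2 ^ (k + 1) ≤ condCoupling D.weight (D.fixedLabel old) p ∧
      ∀ j, Set.EqOn (Sum.elim (D.toFun p.1 j) (D.toFun p.2 j)) (g j)
        (Sum.inl '' verts j ∪ Sum.inr '' old j) := by
  set gL : ∀ j, W j → QQ j := fun j v => g j (Sum.inl v)
  set gR : ∀ j, W j → QQ j := fun j v => g j (if v ∈ old j then Sum.inr v else Sum.inl v)
  obtain ⟨ω, hω, hL⟩ := D.exists_eqOn_le_weight gL fun e he => hg _ (inl_mem_doubleEdges he)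
  obtain ⟨ω', hω', hR⟩ := D.exists_eqOn_le_weight gR fun e he => hg _ (mixed_mem_doubleEdges he)
  have hlab : D.fixedLabel old ω = D.fixedLabel old ω' :=
    fixedLabel_eq_fixedLabel_iff.2 fun j v hv => by
      rw [hL j hv.1, hR j hv.1]
      simp [gL, gR, hv.2]
  refine ⟨(ω, ω'), ?_, fun j => ?_⟩
  · calc 1 / (Qbar.card : ℝ) ^ 2 ^ (k + 1)
        = 1 / (Qbar.card : ℝ) ^ 2 ^ k * (1 / (Qbar.card : ℝ) ^ 2 ^ k) := by ring
      _ ≤ D.weight ω * D.weight ω' := mul_le_mul hω hω' (by positivity) (D.weight_nonneg ω)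
      _ ≤ _ := mul_le_condCoupling (p := (ω, ω')) _ D.weight_nonneg D.sum_weight hlab
  · rintro _ (⟨v, hv, rfl⟩ | ⟨v, hv, rfl⟩)
    · exact hL j hv
    · exact (hR j (hold j hv)).trans (by simp [gR, hv])

open Classical in
noncomputable def double (hold : ∀ j, old j ⊆ verts j)
    (hedges : ∀ e ∈ edges, ∀ j, e j ∈ verts j) :
    HomSampler Qbar (fun j => W j ⊕ W j) (fun j => Sum.inl '' verts j ∪ Sum.inr '' old j)
      (doubleEdges edges old) (k + 1) where
  Ω := D.Ω × D.Ω
  weight := condCoupling D.weight (D.fixedLabel old)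
  toFun p j := Sum.elim (D.toFun p.1 j) (D.toFun p.2 j)
  weight_nonneg := condCoupling_nonneg _ D.weight_nonneg
  sum_weight := (sum_condCoupling _ D.weight_nonneg).trans D.sum_weight
  mem_of_weight_ne_zero p hp e' he' := by
    obtain ⟨hw₁, hw₂⟩ := ne_zero_of_condCoupling_ne_zero _ hp
    obtain ⟨e, he, hinl | hmixed⟩ := exists_eq_of_mem_doubleEdges hedges he' (R := QQ)
    · rw [hinl]
      exact D.mem_of_weight_ne_zero _ hw₁ e he
    · rw [hmixed _ _ (fixedLabel_eq_fixedLabel_iff.1 (label_eq_of_condCoupling_ne_zero _ hp))]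
      exact D.mem_of_weight_ne_zero _ hw₂ e he
  density_pow_le := D.density_pow_le_double hedges
  exists_eqOn_le_weight _ hg := D.exists_eqOn_le_weight_double hold hg

end Double

end HomSampler

theorem ConstructibleHG.nonempty_homSampler {r k : ℕ} {QQ : Fin r → Type}
    [∀ j, Fintype (QQ j)] [∀ j, DecidableEq (QQ j)] {Qbar : Finset (∀ j, QQ j)}
    (hQ : Qbar.Nonempty) {W : Fin r → Type} {verts : ∀ j, Set (W j)} {edges : Set (∀ j, W j)}
    (hc : ConstructibleHG r W verts edges k) : Nonempty (HomSampler Qbar W verts edges k) := by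
  induction hc with
  | single W e => exact ⟨.single hQ e⟩
  | double W verts edges old k hold h ih => exact ⟨ih.some.double hold h.mem_verts⟩
  | collapse W verts P edges k σ hP hσ hfix h ih => exact ⟨ih.some.collapse P σ hP hσ hfix⟩
  | iso W W' verts edges k φ hφ h ih => exact ⟨ih.some.iso hQ.choose hφ h.mem_verts⟩

/-- If `P̄` is constructible by conditioning using `k` doublings and `Q̄` is another
`r`-partite `r`-regular hypergraph with `M` hyperedges, then there is a probability
distribution `H` on `Hom(P̄,Q̄)` such that (with `C = 2^k`): an i.i.d. `H`-vector
`(f_1,…,f_n)` maps all hyperedges of `P̄` simultaneously into any given `S ⊆ Q̄ⁿ` with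
probability at least `μ(S)^C`, and every homomorphism has probability at least `1/M^C`. -/
theorem statement11 (r k : ℕ)
    (QP : Fin r → Type) [∀ j, Fintype (QP j)] [∀ j, DecidableEq (QP j)]
    (Pbar : Finset (∀ j, QP j))
    (hcon : ConstructibleHG r QP (fun _ => Set.univ) (↑Pbar) k)
    (QQ : Fin r → Type) [∀ j, Fintype (QQ j)] [∀ j, DecidableEq (QQ j)]
    (Qbar : Finset (∀ j, QQ j)) (hQne : Qbar.Nonempty)
    (M : ℕ) (hM : M = Qbar.card) :
    ∃ H : (∀ j, QP j → QQ j) → ℝ,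
      (∀ f, 0 ≤ H f) ∧
      (∀ f ∉ homSet Pbar Qbar, H f = 0) ∧
      (∑ f ∈ homSet Pbar Qbar, H f = 1) ∧
      (∀ (n : ℕ) (S : Finset (Fin n → ∀ j, QQ j)),
        S ⊆ Fintype.piFinset (fun _ => Qbar) →
        ((S.card : ℝ) / (M : ℝ) ^ n) ^ (2 ^ k : ℕ) ≤
          ∑ F ∈ (Fintype.piFinset fun _ : Fin n => homSet Pbar Qbar).filter
              (fun F => ∀ p ∈ Pbar, (fun i j => F i j (p j)) ∈ S),
            ∏ i, H (F i)) ∧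
      (∀ f ∈ homSet Pbar Qbar, 1 / (M : ℝ) ^ (2 ^ k : ℕ) ≤ H f) := by
  subst hM
  obtain ⟨D⟩ := hcon.nonempty_homSampler hQne
  have hhom : ∀ ω, D.weight ω ≠ 0 → D.toFun ω ∈ homSet Pbar Qbar := fun ω hω => by
    simpa [homSet] using D.mem_of_weight_ne_zero ω hω
  refine ⟨fiberWeight D.weight D.toFun, fiberWeight_nonneg _ D.weight_nonneg, ?_, ?_, ?_, ?_⟩
  · intro f hf
    refine sum_eq_zero fun ω hω => by_contra fun hne => hf ?_
    exact (mem_filter.1 hω).2 ▸ hhom ω hne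
  · rw [sum_fiberWeight, sum_filter_of_ne fun ω _ => hhom ω, D.sum_weight]
  · intro n S hS
    have hsupp : ∀ F : Fin n → D.Ω, ∏ i, D.weight (F i) ≠ 0 →
        (fun i => D.toFun (F i)) ∈ Fintype.piFinset fun _ => homSet Pbar Qbar := fun F hne =>
      Fintype.mem_piFinset.2 fun i => hhom _ (prod_ne_zero_iff.1 hne i (mem_univ i))
    refine (D.density_pow_le n S hS).trans ?_
    -- the sampler's filter is decidable classically; `filter_congr_decidable` switches instances
    rw [sum_prod_fiberWeight, filter_congr_decidable]
    exact sum_filter_le_sum_filter_of_ne_zero (fun F _ => D.prod_weight_nonneg F)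
      fun F _ hF hne => mem_filter.2 ⟨hsupp F hne, hF⟩
  · intro f hf
    obtain ⟨ω, hω, hagree⟩ := D.exists_eqOn_le_weight f (mem_filter.1 hf).2
    have hωf : D.toFun ω = f := funext fun j => funext fun v => hagree j (Set.mem_univ v)
    exact hω.trans (hωf ▸ le_fiberWeight D.toFun D.weight_nonneg ω)
end

section
/- Every tree with at least one edge, viewed as a bipartite graph (i.e., as a 2-regular bipartite 2-prover question set with parts given by its bipartition), is constructible by conditioning. -/
/-- The class of bipartite graphs (presented by part types `X`, `Y`, vertex sets
`vx ⊆ X`, `vy ⊆ Y`, and an edge set `E ⊆ X × Y`) that are constructible by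
conditioning, together with the number of doubling steps used.

* `single`: a single edge is constructible (0 doublings);
* `double`: doubling the old vertices `ox ⊆ vx`, `oy ⊆ vy` (the remaining vertices
  being fixed) adds a fresh copy of every old vertex, and for every edge that is not
  entirely fixed, a new edge in which every old endpoint is replaced by its copy;
* `collapse`: if some homomorphism of the graph into the induced subgraph on
  `px ⊆ vx`, `py ⊆ vy` is the identity on `px ∪ py`, then that induced subgraph
  is constructible;
* `iso`: the class is closed under isomorphic re-presentation of a graph
  (injectively re-embedding the two parts). -/
inductive ConstructibleBip :
    ∀ (X Y : Type), Set X → Set Y → Set (X × Y) → ℕ → Prop where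
  | single (X Y : Type) (x : X) (y : Y) :
      ConstructibleBip X Y {x} {y} {(x, y)} 0
  | double (X Y : Type) (vx : Set X) (vy : Set Y) (E : Set (X × Y))
      (ox : Set X) (oy : Set Y) (k : ℕ)
      (hox : ox ⊆ vx) (hoy : oy ⊆ vy)
      (h : ConstructibleBip X Y vx vy E k) :
      ConstructibleBip (X ⊕ X) (Y ⊕ Y)
        (Sum.inl '' vx ∪ Sum.inr '' ox) (Sum.inl '' vy ∪ Sum.inr '' oy)
        ({ e' | ∃ e ∈ E, e' = (Sum.inl e.1, Sum.inl e.2) } ∪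
         { e' | ∃ e ∈ E, (e.1 ∈ ox ∨ e.2 ∈ oy) ∧
            ((e.1 ∈ ox ∧ e'.1 = Sum.inr e.1) ∨ (e.1 ∉ ox ∧ e'.1 = Sum.inl e.1)) ∧
            ((e.2 ∈ oy ∧ e'.2 = Sum.inr e.2) ∨ (e.2 ∉ oy ∧ e'.2 = Sum.inl e.2)) })
        (k + 1)
  | collapse (X Y : Type) (vx px : Set X) (vy py : Set Y) (E : Set (X × Y)) (k : ℕ)
      (fx : X → X) (fy : Y → Y)
      (hpx : px ⊆ vx) (hpy : py ⊆ vy)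
      (hhom : ∀ e ∈ E, (fx e.1, fy e.2) ∈ { e ∈ E | e.1 ∈ px ∧ e.2 ∈ py })
      (hfixx : ∀ v ∈ px, fx v = v) (hfixy : ∀ v ∈ py, fy v = v)
      (h : ConstructibleBip X Y vx vy E k) :
      ConstructibleBip X Y px py { e ∈ E | e.1 ∈ px ∧ e.2 ∈ py } k
  | iso (X Y X' Y' : Type) (vx : Set X) (vy : Set Y) (E : Set (X × Y)) (k : ℕ)
      (φx : X → X') (φy : Y → Y')
      (hinjx : Set.InjOn φx vx) (hinjy : Set.InjOn φy vy)
      (h : ConstructibleBip X Y vx vy E k) :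
      ConstructibleBip X' Y' (φx '' vx) (φy '' vy)
        { e' | ∃ e ∈ E, e' = (φx e.1, φy e.2) } k
/-- The simple graph on `X ⊕ Y` underlying a bipartite graph with parts `X`, `Y`
and edge set `E ⊆ X × Y`. -/
def bipGraph {X Y : Type} (E : Finset (X × Y)) : SimpleGraph (X ⊕ Y) where
  Adj u v := (∃ p ∈ E, u = Sum.inl p.1 ∧ v = Sum.inr p.2) ∨
    (∃ p ∈ E, u = Sum.inr p.2 ∧ v = Sum.inl p.1)
  symm := by
    constructor
    rintro u v (⟨p, hp, rfl, rfl⟩ | ⟨p, hp, rfl, rfl⟩)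
    · exact Or.inr ⟨p, hp, rfl, rfl⟩
    · exact Or.inl ⟨p, hp, rfl, rfl⟩
  loopless := by
    constructor
    rintro u (⟨p, hp, h1, h2⟩ | ⟨p, hp, h1, h2⟩) <;> subst h1 <;> simp_all


/-!
A finite tree is grown from a single edge by attaching pendant edges one at a time (remove a leaf
and recurse), so it suffices that attaching a pendant edge preserves constructibility. To attach
`(x, y)` at a vertex `x` with a neighbour `y₀`, double every vertex except `x`: this glues a copy
of the whole graph to itself at `x`. The copy retracts onto the single copied edge `(x, y₀')` by
sending its `X`-vertices to `x` and its `Y`-vertices to `y₀'`, so the graph collapses onto the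
original one plus the pendant edge `(x, y₀')`; renaming `y₀'` to `y` finishes. Pendant edges at
a `Y`-vertex are handled by exchanging the two parts.
-/

section Constructible

open Sum

variable {X Y : Type}

theorem ConstructibleBip.swap {vx : Set X} {vy : Set Y} {E : Set (X × Y)} {k : ℕ}
    (h : ConstructibleBip X Y vx vy E k) : ConstructibleBip Y X vy vx (Prod.swap '' E) k := by
  induction h with
  | single X Y x y => simpa using ConstructibleBip.single Y X y x
  | double X Y vx vy E ox oy k hox hoy _ ih =>
    convert ih.double _ _ _ _ _ oy ox k hoy hox using 1
    ext ⟨a, b⟩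
    aesop
  | collapse X Y vx px vy py E k fx fy hpx hpy hhom hfixx hfixy _ ih =>
    convert ih.collapse _ _ _ py _ px _ k fy fx hpy hpx ?_ hfixy hfixx using 1
    · ext ⟨a, b⟩
      aesop
    · rintro _ ⟨e, he, rfl⟩
      have := hhom e he
      simp_all
  | iso X Y X' Y' vx vy E k φx φy hinjx hinjy _ ih =>
    convert ih.iso _ _ _ _ _ _ _ k φy φx hinjy hinjx using 1
    ext ⟨a, b⟩
    aesop

theorem ConstructibleBip.image {X' Y' : Type} {vx : Set X} {vy : Set Y} {E : Set (X × Y)} {k : ℕ}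
    (h : ConstructibleBip X Y vx vy E k) {φx : X → X'} {φy : Y → Y'} (hφx : Set.InjOn φx vx)
    (hφy : Set.InjOn φy vy) :
    ConstructibleBip X' Y' (φx '' vx) (φy '' vy) (Prod.map φx φy '' E) k := by
  convert h.iso _ _ _ _ _ _ _ k φx φy hφx hφy using 1
  ext
  simp [eq_comm]

theorem ConstructibleBip.insert_pendant_right {vx : Set X} {vy : Set Y} {E : Set (X × Y)}
    {k : ℕ} (h : ConstructibleBip X Y vx vy E k) (hE : E ⊆ vx ×ˢ vy) {x : X} {y₀ y : Y}
    (hxy₀ : (x, y₀) ∈ E) (hy : y ∉ vy) :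
    ConstructibleBip X Y vx (insert y vy) (insert (x, y) E) (k + 1) := by
  obtain ⟨hx, hy₀⟩ : x ∈ vx ∧ y₀ ∈ vy := hE hxy₀
  have hE' (a : X) (b : Y) (hab : (a, b) ∈ E) : a ∈ vx ∧ b ∈ vy := hE hab
  have hcollapse : ConstructibleBip (X ⊕ X) (Y ⊕ Y) (inl '' vx) (insert (inr y₀) (inl '' vy))
      (insert (inl x, inr y₀) (Prod.map inl inl '' E)) (k + 1) := by
    convert (h.double _ _ _ _ _ (vx \ {x}) vy k Set.sdiff_subset subset_rfl).collapse
      _ _ _ _ _ _ _ _ (Sum.elim inl fun _ => inl x) (Sum.elim inl fun _ => inr y₀)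
      Set.subset_union_left ?_ ?_ ?_ ?_ using 1
    · ext ⟨a | a, b | b⟩ <;> aesop (add safe forward hE')
    · rintro _ (rfl | hb)
      · exact Or.inr ⟨y₀, hy₀, rfl⟩
      · exact Or.inl hb
    · rintro ⟨a | a, b | b⟩ hab <;> aesop (add safe forward hE')
    · rintro _ ⟨a, -, rfl⟩
      rfl
    · rintro _ (rfl | ⟨b, -, rfl⟩) <;> rfl
  convert hcollapse.image (φx := Sum.elim id fun _ => x) (φy := Sum.elim id fun _ => y) ?_ ?_
    using 1
  · simp [Set.image_image]
  · simp [Set.image_insert_eq, Set.image_image]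
  · simp [Set.image_insert_eq, Set.image_image, Prod.map_map]
  · rintro _ ⟨a, -, rfl⟩ _ ⟨b, -, rfl⟩ h
    simpa using h
  · rintro _ (rfl | ⟨a, ha, rfl⟩) _ (rfl | ⟨b, hb, rfl⟩) h <;> aesop

theorem ConstructibleBip.insert_pendant_left {vx : Set X} {vy : Set Y} {E : Set (X × Y)}
    {k : ℕ} (h : ConstructibleBip X Y vx vy E k) (hE : E ⊆ vx ×ˢ vy) {x₀ x : X} {y : Y}
    (hx₀y : (x₀, y) ∈ E) (hx : x ∉ vx) :
    ConstructibleBip X Y (insert x vx) vy (insert (x, y) E) (k + 1) := by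
  have hE' : Prod.swap '' E ⊆ vy ×ˢ vx := by
    rw [← Set.image_swap_prod]
    exact Set.image_mono hE
  simpa [Set.image_insert_eq, Set.image_image] using
    (h.swap.insert_pendant_right hE' ⟨_, hx₀y, rfl⟩ hx).swap

end Constructible

namespace SimpleGraph

variable {V : Type*} {G : SimpleGraph V}

lemma IsAcyclic.exists_mem_support_subsingleton_neighborSet [Finite G.edgeSet]
    (hG : G.IsAcyclic) {a b : V} (hab : G.Adj a b) :
    ∃ v ∈ G.support, (G.neighborSet v).Subsingleton := by
  have : Nonempty V := ⟨a⟩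
  -- the start of a longest path is a leaf
  obtain ⟨u, v, p, hp, hmax⟩ := Walk.exists_isPath_forall_isPath_length_le_length G
  have hnil : ¬p.Nil := fun h => by
    simpa [Walk.length_eq_zero_iff.mpr h] using hmax _ _ _ (Path.singleton hab).property
  have hsnd (w : V) (hw : G.Adj u w) : w = p.snd := by
    refine hG.eq_snd_of_adj_start hp hw (by_contra fun hws => ?_)
    simpa using hmax _ _ _ (hp.cons hws (h := hw.symm))
  exact ⟨u, ⟨_, p.adj_snd hnil⟩, fun w hw w' hw' => (hsnd w hw).trans (hsnd w' hw').symm⟩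

def SupportPreconnected (G : SimpleGraph V) : Prop :=
  ∀ a ∈ G.support, ∀ b ∈ G.support, G.Reachable a b

lemma notMem_support_deleteEdges_of_subsingleton_neighborSet {v w : V} (hvw : G.Adj v w)
    (hv : (G.neighborSet v).Subsingleton) : v ∉ (G.deleteEdges {s(v, w)}).support := by
  intro h
  obtain ⟨b, hb⟩ := (mem_support _).mp h
  rw [deleteEdges_adj] at hb
  exact hb.2 (by rw [hv hb.1 hvw]; rfl)

lemma Reachable.deleteEdges_of_subsingleton_neighborSet {v w a b : V}
    (hv : (G.neighborSet v).Subsingleton) (h : G.Reachable a b) (ha : a ≠ v) (hb : b ≠ v) :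
    (G.deleteEdges {s(v, w)}).Reachable a b := by
  obtain ⟨p, hp⟩ := h.exists_isPath
  have hvp := hp.isTrail.not_mem_support_of_subsingleton_neighborSet ha.symm hb.symm hv
  exact ⟨p.toDeleteEdge _ fun he => hvp (p.fst_mem_support_of_mem_edges he)⟩

lemma SupportPreconnected.deleteEdges_of_subsingleton_neighborSet (hG : G.SupportPreconnected)
    {v w : V} (hvw : G.Adj v w) (hv : (G.neighborSet v).Subsingleton) :
    (G.deleteEdges {s(v, w)}).SupportPreconnected := by
  have hvH := notMem_support_deleteEdges_of_subsingleton_neighborSet hvw hv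
  intro a ha b hb
  refine (hG a (support_mono (deleteEdges_le _) ha) b (support_mono (deleteEdges_le _) hb)
    ).deleteEdges_of_subsingleton_neighborSet hv ?_ ?_
  · rintro rfl; exact hvH ha
  · rintro rfl; exact hvH hb

lemma SupportPreconnected.support_deleteEdges_of_subsingleton_neighborSet
    (hG : G.SupportPreconnected) {v w : V} (hvw : G.Adj v w)
    (hv : (G.neighborSet v).Subsingleton) (hne : (G.deleteEdges {s(v, w)}).support.Nonempty) :
    (G.deleteEdges {s(v, w)}).support = G.support \ {v} := by
  have hvH := notMem_support_deleteEdges_of_subsingleton_neighborSet hvw hv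
  obtain ⟨c, hc⟩ := hne
  apply subset_antisymm
  · intro a ha
    exact ⟨support_mono (deleteEdges_le _) ha, by rintro rfl; exact hvH ha⟩
  rintro a ⟨ha, hav : a ≠ v⟩
  obtain rfl | hac := eq_or_ne a c
  · exact hc
  obtain ⟨p⟩ := (hG a ha c (support_mono (deleteEdges_le _) hc)
    ).deleteEdges_of_subsingleton_neighborSet (w := w) hv hav (by rintro rfl; exact hvH hc)
  exact ⟨_, p.adj_snd (Walk.not_nil_of_ne hac)⟩

end SimpleGraph

section BipGraph

open Sum

variable {X Y : Type} {E : Finset (X × Y)}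

@[simp] lemma bipGraph_adj_inl_inr {x : X} {y : Y} :
    (bipGraph E).Adj (inl x) (inr y) ↔ (x, y) ∈ E := by
  simp [bipGraph]

@[simp] lemma bipGraph_adj_inr_inl {x : X} {y : Y} :
    (bipGraph E).Adj (inr y) (inl x) ↔ (x, y) ∈ E := by
  simp [bipGraph]

@[simp] lemma bipGraph_not_adj_inl_inl {x x' : X} : ¬(bipGraph E).Adj (inl x) (inl x') := by
  simp [bipGraph]

@[simp] lemma bipGraph_not_adj_inr_inr {y y' : Y} : ¬(bipGraph E).Adj (inr y) (inr y') := by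
  simp [bipGraph]

lemma edgeSet_bipGraph :
    (bipGraph E).edgeSet = (fun e : X × Y => s(inl e.1, inr e.2)) '' (E : Set (X × Y)) := by
  ext z
  induction z using Sym2.ind with
  | _ a b => cases a <;> cases b <;> simp [Sym2.eq_swap]

instance : Finite (bipGraph E).edgeSet := by
  rw [edgeSet_bipGraph]
  exact (E.finite_toSet.image _).to_subtype

lemma inl_mem_support_bipGraph {x : X} :
    inl x ∈ (bipGraph E).support ↔ x ∈ Prod.fst '' (E : Set (X × Y)) := by
  simp [SimpleGraph.mem_support]

lemma inr_mem_support_bipGraph {y : Y} :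
    inr y ∈ (bipGraph E).support ↔ y ∈ Prod.snd '' (E : Set (X × Y)) := by
  simp [SimpleGraph.mem_support]

lemma bipGraph_erase [DecidableEq X] [DecidableEq Y] (x : X) (y : Y) :
    bipGraph (E.erase (x, y)) = (bipGraph E).deleteEdges {s(inl x, inr y)} := by
  ext (a | a) (b | b) <;> simp [Sym2.eq_swap] <;> tauto

end BipGraph

section Tree

open Sum Finset

variable {X Y : Type}

def IsConstructible (E : Finset (X × Y)) : Prop :=
  ∃ k, ConstructibleBip X Y (Prod.fst '' (E : Set (X × Y))) (Prod.snd '' (E : Set (X × Y))) E k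

lemma IsConstructible.insert_right [DecidableEq X] [DecidableEq Y] {E : Finset (X × Y)}
    (h : IsConstructible E) {x : X} {y : Y} (hx : x ∈ Prod.fst '' (E : Set (X × Y)))
    (hy : y ∉ Prod.snd '' (E : Set (X × Y))) : IsConstructible (insert (x, y) E) := by
  obtain ⟨k, hk⟩ := h
  refine ⟨k + 1, ?_⟩
  rw [coe_insert, Set.image_insert_eq, Set.image_insert_eq, Set.insert_eq_of_mem hx]
  obtain ⟨⟨x, y₀⟩, hxy₀, rfl⟩ := hx
  exact hk.insert_pendant_right Set.subset_fst_image_prod_snd_image hxy₀ hy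

lemma IsConstructible.insert_left [DecidableEq X] [DecidableEq Y] {E : Finset (X × Y)}
    (h : IsConstructible E) {x : X} {y : Y} (hx : x ∉ Prod.fst '' (E : Set (X × Y)))
    (hy : y ∈ Prod.snd '' (E : Set (X × Y))) : IsConstructible (insert (x, y) E) := by
  obtain ⟨k, hk⟩ := h
  refine ⟨k + 1, ?_⟩
  rw [coe_insert, Set.image_insert_eq, Set.image_insert_eq, Set.insert_eq_of_mem hy]
  obtain ⟨⟨x₀, y⟩, hx₀y, rfl⟩ := hy
  exact hk.insert_pendant_left Set.subset_fst_image_prod_snd_image hx₀y hx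

theorem isConstructible_of_isAcyclic [DecidableEq X] [DecidableEq Y] (E : Finset (X × Y))
    (hne : E.Nonempty) (hacyc : (bipGraph E).IsAcyclic) (hconn : (bipGraph E).SupportPreconnected) :
    IsConstructible E := by
  induction E using Finset.strongInduction with
  | H E ih =>
  obtain ⟨⟨x, y⟩, hxy⟩ := hne
  obtain ⟨v, hvS, hv⟩ :=
    hacyc.exists_mem_support_subsingleton_neighborSet (a := inl x) (b := inr y) (by simpa)
  obtain ⟨w, hvw⟩ := (SimpleGraph.mem_support _).mp hvS
  obtain ⟨⟨x₀, y₀⟩, hxy₀, hside⟩ :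
      ∃ e ∈ E, v = inl e.1 ∧ w = inr e.2 ∨ v = inr e.2 ∧ w = inl e.1 := by
    rcases hvw with ⟨e, he, h⟩ | ⟨e, he, h⟩
    exacts [⟨e, he, Or.inl h⟩, ⟨e, he, Or.inr h⟩]
  rcases (E.erase (x₀, y₀)).eq_empty_or_nonempty with hE' | hne'
  · obtain rfl : E = {(x₀, y₀)} :=
      ((erase_eq_empty_iff _ _).mp hE').resolve_left (ne_empty_of_mem hxy₀)
    exact ⟨0, by simpa using ConstructibleBip.single X Y x₀ y₀⟩
  set E' := E.erase (x₀, y₀)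
  have hG' : bipGraph E' = (bipGraph E).deleteEdges {s(v, w)} := by
    rcases hside with ⟨rfl, rfl⟩ | ⟨rfl, rfl⟩
    · exact bipGraph_erase x₀ y₀
    · rw [Sym2.eq_swap]; exact bipGraph_erase x₀ y₀
  have hS' : (bipGraph E').support = (bipGraph E).support \ {v} := by
    obtain ⟨⟨x₁, y₁⟩, h₁⟩ := hne'
    rw [hG']
    refine hconn.support_deleteEdges_of_subsingleton_neighborSet hvw hv ⟨inl x₁, inr y₁, ?_⟩
    rw [← hG']
    simpa using h₁
  have hE' : IsConstructible E' := ih E' (erase_ssubset hxy₀) hne'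
    (hG' ▸ hacyc.anti (SimpleGraph.deleteEdges_le _))
    (hG' ▸ hconn.deleteEdges_of_subsingleton_neighborSet hvw hv)
  rw [← insert_erase hxy₀]
  rcases hside with ⟨rfl, rfl⟩ | ⟨rfl, rfl⟩
  · refine hE'.insert_left ?_ ?_
    · rw [← inl_mem_support_bipGraph, hS']
      simp
    · rw [← inr_mem_support_bipGraph, hS']
      exact ⟨⟨_, hvw.symm⟩, by simp⟩
  · refine hE'.insert_right ?_ ?_
    · rw [← inl_mem_support_bipGraph, hS']
      exact ⟨⟨_, hvw.symm⟩, by simp⟩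
    · rw [← inr_mem_support_bipGraph, hS']
      simp

end Tree

theorem statement14_general (X Y : Type) [DecidableEq X] [DecidableEq Y]
    (E : Finset (X × Y)) (hne : E.Nonempty)
    (hcovX : ∀ x : X, ∃ y, (x, y) ∈ E) (hcovY : ∀ y : Y, ∃ x, (x, y) ∈ E)
    (htree : (bipGraph E).IsTree) :
    ∃ k, ConstructibleBip X Y Set.univ Set.univ (↑E : Set (X × Y)) k := by
  have hX : Prod.fst '' (E : Set (X × Y)) = Set.univ :=
    Set.eq_univ_of_forall fun x => by
      obtain ⟨y, hxy⟩ := hcovX x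
      exact ⟨(x, y), hxy, rfl⟩
  have hY : Prod.snd '' (E : Set (X × Y)) = Set.univ :=
    Set.eq_univ_of_forall fun y => by
      obtain ⟨x, hxy⟩ := hcovY y
      exact ⟨(x, y), hxy, rfl⟩
  obtain ⟨k, hk⟩ := isConstructible_of_isAcyclic E hne htree.isAcyclic
    fun u _ w _ => htree.connected.preconnected u w
  exact ⟨k, hX ▸ hY ▸ hk⟩

/-- Every (finite) tree with at least one edge, viewed as a bipartite graph with
parts given by its bipartition (`X`, `Y`, edge set `E`, every vertex lying on an
edge), is constructible by conditioning. -/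
theorem statement14 (X Y : Type) [Fintype X] [Fintype Y] [DecidableEq X] [DecidableEq Y]
    (E : Finset (X × Y)) (hne : E.Nonempty)
    (hcovX : ∀ x : X, ∃ y, (x, y) ∈ E) (hcovY : ∀ y : Y, ∃ x, (x, y) ∈ E)
    (htree : (bipGraph E).IsTree) :
    ∃ k, ConstructibleBip X Y Set.univ Set.univ (↑E : Set (X × Y)) k :=
  statement14_general X Y E hne hcovX hcovY htree
end
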